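/- arXiv:2403.20082 — 8 statements merged into one kernel-verified Lean document; each statement's English description precedes it below -/
import Mathlib

section
/- The Gabor transform of the Fresnel function with Gaussian window: for the window g(y) = (πℏ)^{-d/4} e^{-|y|²/(2ℏ)} and the Fresnel function F₊(y) = (2πiℏ)^{-d/2} e^{i|y|²/(2ℏ)}, one has for all x, ξ ∈ ℝ^d: V_g F₊(x,ξ) = (2πℏ)^{-d/2} (πℏ)^{-d/4} (1+i)^{-d/2} e^{(i/(4ℏ))(|x|² - 2x·ξ - |ξ|²)} e^{-|x-ξ|²/(4ℏ)}. -/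
open MeasureTheory Complex Filter
open scoped RealInnerProductSpace ENNReal Topology

noncomputable section

abbrev Ed (d : ℕ) := EuclideanSpace ℝ (Fin d)

/-- Short-time Fourier transform with parameter ℏ. -/
def STFT (ℏ : ℝ) {d : ℕ} (g f : Ed d → ℂ) (x ξ : Ed d) : ℂ :=
  (((2 * Real.pi * ℏ : ℝ) : ℂ)) ^ (-(d : ℂ) / 2) *
    ∫ y : Ed d, Complex.exp (-(Complex.I / (ℏ : ℂ)) * ((inner ℝ ξ y : ℝ) : ℂ)) * f y *
      (starRingEnd ℂ) (g (y - x))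

/-- The Fresnel function F₊. -/
def Fplus (ℏ : ℝ) (d : ℕ) (y : Ed d) : ℂ :=
  (((2 * Real.pi : ℝ) : ℂ) * Complex.I * (ℏ : ℂ)) ^ (-(d : ℂ) / 2) *
    Complex.exp (Complex.I * ((‖y‖ ^ 2 : ℝ) : ℂ) / (2 * (ℏ : ℂ)))

/-- The M^{∞,1} (Sjöstrand) norm with window g. -/
def Msjo (ℏ : ℝ) {d : ℕ} (g f : Ed d → ℂ) : ℝ≥0∞ :=
  ∫⁻ ξ : Ed d, ⨆ x : Ed d, (‖STFT ℏ g f x ξ‖₊ : ℝ≥0∞)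

/-- Gaussian window with diagonal matrix Q = diag(q). -/
def gwin (ℏ : ℝ) {n : ℕ} (q : Fin n → ℝ) (x : Ed n) : ℂ :=
  (((2 * Real.pi * ℏ : ℝ) : ℂ)) ^ (-(n : ℂ) / 2) *
    Complex.exp (-(((∑ j, q j * (x j) ^ 2 : ℝ)) : ℂ) / (2 * (ℏ : ℂ)))

/-!
Substituting `y = v + x`, the integrand of `V_g F₊(x, ξ)` becomes a constant phase times the
Gaussian `exp (-b‖v‖² + c⟪x - ξ, v⟫)` with `b = (1 - i)/(2ℏ)` and `c = i/ℏ`. The Gaussian integral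
contributes `(π/b)^{d/2} = (πℏ(1 + i))^{d/2}`, and since `2i = (1 + i)²` with `arg (1 + i) = π/4`,
this combines with the Fresnel normalisation `(2πiℏ)^{-d/2}` into `(1 + i)^{-d/2}` on the
principal branch.
-/

namespace Complex

lemma one_add_I_sq : (1 + I) ^ 2 = 2 * I := by
  rw [add_sq, I_sq]; ring

lemma ofReal_mul_cpow {a : ℝ} (ha : 0 < a) {z : ℂ} (hz : z ≠ 0) (s : ℂ) :
    ((a : ℂ) * z) ^ s = (a : ℂ) ^ s * z ^ s := by
  have ha' : (a : ℂ) ≠ 0 := ofReal_ne_zero.2 ha.ne'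
  rw [cpow_def_of_ne_zero (mul_ne_zero ha' hz), cpow_def_of_ne_zero ha', cpow_def_of_ne_zero hz,
    log_ofReal_mul ha hz, ofReal_log ha.le, add_mul, exp_add]

lemma one_add_I_ne_zero : 1 + I ≠ 0 := by
  intro h
  simpa using congrArg im h

lemma two_mul_I_cpow (s : ℂ) : (2 * I) ^ s = (1 + I) ^ (2 * s) := by
  have h0 : 0 ≤ (1 + I).arg := arg_nonneg_iff.2 (by simp)
  have h1 : (1 + I).arg ≤ Real.pi / 2 := arg_le_pi_div_two_iff.2 (.inl (by simp))
  rw [← one_add_I_sq, cpow_ofNat_mul'] <;> linarith [Real.pi_pos]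

lemma two_mul_I_cpow_neg_mul_cpow {a : ℝ} (ha : 0 < a) (s : ℂ) :
    (2 * a * I) ^ (-s) * ((a : ℂ) * (1 + I)) ^ s = (1 + I) ^ (-s) := by
  have ha' : (a : ℂ) ≠ 0 := ofReal_ne_zero.2 ha.ne'
  rw [show (2 * a * I : ℂ) = a * (2 * I) by ring,
    ofReal_mul_cpow ha (by simp [I_ne_zero]), ofReal_mul_cpow ha one_add_I_ne_zero,
    two_mul_I_cpow]
  calc (a : ℂ) ^ (-s) * (1 + I) ^ (2 * -s) * ((a : ℂ) ^ s * (1 + I) ^ s)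
      = (a : ℂ) ^ (-s + s) * (1 + I) ^ (2 * -s + s) := by
        rw [cpow_add _ _ ha', cpow_add _ _ one_add_I_ne_zero]; ring
    _ = (1 + I) ^ (-s) := by rw [neg_add_cancel, cpow_zero, one_mul]; congr 1; ring

end Complex

section Chirp

variable {V : Type*} [NormedAddCommGroup V] [InnerProductSpace ℝ V]

lemma chirp_gaussian_window_exponent {ℏ : ℝ} (hℏ : ℏ ≠ 0) (x ξ v : V) :
    -(I / ℏ) * ⟪ξ, v + x⟫ + I * ‖v + x‖ ^ 2 / (2 * ℏ) + -‖v + x - x‖ ^ 2 / (2 * ℏ) =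
      I * (‖x‖ ^ 2 - 2 * ⟪x, ξ⟫) / (2 * ℏ) +
        (-((1 - I) / (2 * ℏ)) * ‖v‖ ^ 2 + I / ℏ * ⟪x - ξ, v⟫) := by
  have hℏ' : (ℏ : ℂ) ≠ 0 := ofReal_ne_zero.2 hℏ
  rw [add_sub_cancel_right, ← ofReal_pow, norm_add_sq_real, inner_add_right, inner_sub_left,
    real_inner_comm v x, real_inner_comm v ξ, real_inner_comm x ξ]
  push_cast
  field_simp
  ring

variable [FiniteDimensional ℝ V] [MeasurableSpace V] [BorelSpace V]

lemma integral_chirp_mul_gaussian_window {ℏ : ℝ} (hℏ : 0 < ℏ) (x ξ : V) :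
    ∫ y : V, cexp (-(I / ℏ) * ⟪ξ, y⟫) * cexp (I * ‖y‖ ^ 2 / (2 * ℏ)) *
        cexp (-‖y - x‖ ^ 2 / (2 * ℏ)) =
      ((Real.pi * ℏ : ℝ) * (1 + I)) ^ (Module.finrank ℝ V / 2 : ℂ) *
        cexp (I / (4 * ℏ) * (‖x‖ ^ 2 - 2 * ⟪x, ξ⟫ - ‖ξ‖ ^ 2)) *
        cexp (-‖x - ξ‖ ^ 2 / (4 * ℏ)) := by
  have hℏ' : (ℏ : ℂ) ≠ 0 := ofReal_ne_zero.2 hℏ.ne'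
  have hb : 0 < ((1 - I) / (2 * ℏ)).re := by
    rw [show (2 * ℏ : ℂ) = ((2 * ℏ : ℝ) : ℂ) by push_cast; ring, div_ofReal_re]
    simp only [sub_re, one_re, I_re, sub_zero]
    positivity
  rw [← integral_add_right_eq_self _ x]
  simp only [← Complex.exp_add]
  simp only [chirp_gaussian_window_exponent hℏ.ne', Complex.exp_add (_ / _)]
  have h1I : (1 : ℂ) - I ≠ 0 := fun h ↦ by simpa using congrArg im h
  have hπb : (Real.pi : ℂ) / ((1 - I) / (2 * ℏ)) = (Real.pi * ℏ : ℝ) * (1 + I) := by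
    push_cast
    field_simp
    linear_combination I_sq
  have hphase : I * (‖x‖ ^ 2 - 2 * ⟪x, ξ⟫) / (2 * ℏ) +
      (I / ℏ) ^ 2 * ‖x - ξ‖ ^ 2 / (4 * ((1 - I) / (2 * ℏ))) =
      I / (4 * ℏ) * (‖x‖ ^ 2 - 2 * ⟪x, ξ⟫ - ‖ξ‖ ^ 2) + -‖x - ξ‖ ^ 2 / (4 * ℏ) := by
    have hw : (‖x - ξ‖ : ℂ) ^ 2 = ‖x‖ ^ 2 - 2 * ⟪x, ξ⟫ + ‖ξ‖ ^ 2 := by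
      exact_mod_cast congrArg ofReal (norm_sub_sq_real x ξ)
    rw [hw]
    field_simp
    linear_combination (2 * (‖x‖ ^ 2 - 2 * ⟪x, ξ⟫ + ‖ξ‖ ^ 2) : ℂ) * I_sq
  rw [integral_const_mul, GaussianFourier.integral_cexp_neg_mul_sq_norm_add hb, hπb,
    mul_left_comm, ← Complex.exp_add, hphase, Complex.exp_add, mul_assoc]

end Chirp

lemma fresnel_mul_conj_real_gaussian (ℏ c : ℝ) {d : ℕ} (x ξ y : Ed d) :
    cexp (-(I / ℏ) * ⟪ξ, y⟫) * Fplus ℏ d y *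
        starRingEnd ℂ (c * cexp (-((‖y - x‖ ^ 2 : ℝ) : ℂ) / (2 * ℏ))) =
      ((2 * (Real.pi * ℏ : ℝ) * I) ^ (-(d / 2 : ℂ)) * c) *
        (cexp (-(I / ℏ) * ⟪ξ, y⟫) * cexp (I * ‖y‖ ^ 2 / (2 * ℏ)) *
          cexp (-‖y - x‖ ^ 2 / (2 * ℏ))) := by
  simp only [Fplus, map_mul, conj_ofReal, ← exp_conj, map_div₀, map_neg, map_ofNat, neg_div]
  push_cast
  ring_nf

/-- explicit Gabor transform of the Fresnel function with Gaussian window. -/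
theorem gabor_fresnel_gaussian (ℏ : ℝ) (hℏ : 0 < ℏ) (d : ℕ)
    (g : Ed d → ℂ)
    (hg : g = fun y => (((Real.pi * ℏ) ^ (-(d : ℝ) / 4) : ℝ) : ℂ) *
      Complex.exp (-((‖y‖ ^ 2 : ℝ) : ℂ) / (2 * (ℏ : ℂ)))) :
    ∀ x ξ : Ed d,
      STFT ℏ g (Fplus ℏ d) x ξ =
        (((2 * Real.pi * ℏ) ^ (-(d : ℝ) / 2) : ℝ) : ℂ) *
        (((Real.pi * ℏ) ^ (-(d : ℝ) / 4) : ℝ) : ℂ) *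
        (1 + Complex.I) ^ (-(d : ℂ) / 2) *
        Complex.exp ((Complex.I / (4 * (ℏ : ℂ))) *
          (((‖x‖ ^ 2 : ℝ) : ℂ) - 2 * ((inner ℝ x ξ : ℝ) : ℂ) - ((‖ξ‖ ^ 2 : ℝ) : ℂ))) *
        Complex.exp (-((‖x - ξ‖ ^ 2 : ℝ) : ℂ) / (4 * (ℏ : ℂ))) := by
  subst hg
  intro x ξ
  have hprefactor : ((2 * Real.pi * ℏ : ℝ) : ℂ) ^ (-(d : ℂ) / 2) =
      (((2 * Real.pi * ℏ) ^ (-(d : ℝ) / 2) : ℝ) : ℂ) := by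
    rw [ofReal_cpow (by positivity)]
    push_cast
    rfl
  simp only [STFT, fresnel_mul_conj_real_gaussian, integral_const_mul,
    integral_chirp_mul_gaussian_window hℏ, finrank_euclideanSpace_fin, hprefactor]
  set c : ℂ := (((Real.pi * ℏ) ^ (-(d : ℝ) / 4) : ℝ) : ℂ)
  calc _ = (((2 * Real.pi * ℏ) ^ (-(d : ℝ) / 2) : ℝ) : ℂ) * c *
        ((2 * (Real.pi * ℏ : ℝ) * I) ^ (-(d / 2 : ℂ)) *
          ((Real.pi * ℏ : ℝ) * (1 + I)) ^ (d / 2 : ℂ)) *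
        cexp (I / (4 * ℏ) * (‖x‖ ^ 2 - 2 * ⟪x, ξ⟫ - ‖ξ‖ ^ 2)) *
        cexp (-‖x - ξ‖ ^ 2 / (4 * ℏ)) := by ring
    _ = _ := by
      rw [two_mul_I_cpow_neg_mul_cpow (by positivity), ← neg_div]
      push_cast
      ring
end
end

section
/- Schwartz decay of the STFT of the Fresnel function along the anti-diagonal: for every window g in the Schwartz class S(ℝ^d) and every N ∈ ℕ there exists a constant C_N > 0 such that |V_g F₊(x,ξ)| ≤ C_N (1 + |x-ξ|²)^{-N} for all x, ξ ∈ ℝ^d. -/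
/-! Substituting `y = x + u`, the phase of the integrand of `V_g F₊(x, ξ)` splits as
`(|x|²/2 - ξ·x)/ℏ + (x - ξ)·u/ℏ + |u|²/(2ℏ)`. Up to constants and a unimodular factor,
`V_g F₊(x, ξ)` is therefore the Fourier transform at `(ξ - x)/(2πℏ)` of `φ = ḡ · e^{i|u|²/(2ℏ)}`.
The chirp has temperate growth, so `φ` and hence `𝓕φ` are Schwartz functions, and `𝓕φ` decays
faster than any power of `|x - ξ|`. -/

open MeasureTheory Complex Filter
open scoped RealInnerProductSpace ENNReal Topology

noncomputable section

open scoped Real FourierTransform SchwartzMap ComplexConjugate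

lemma hasDerivAt_cexp_ofReal_mul_I (a t : ℝ) :
    HasDerivAt (fun t : ℝ ↦ cexp (↑(a * t) * I)) (a * I * cexp (↑(a * t) * I)) t := by
  have h := (((hasDerivAt_id t).const_mul a).ofReal_comp.mul_const I).cexp
  simp only [id, mul_one] at h
  convert h using 1
  ring

lemma iteratedDeriv_cexp_ofReal_mul_I (a : ℝ) (n : ℕ) :
    iteratedDeriv n (fun t : ℝ ↦ cexp (↑(a * t) * I)) =
      fun t ↦ (a * I) ^ n * cexp (↑(a * t) * I) := by
  induction n with
  | zero => simp
  | succ n ih =>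
    ext t
    rw [iteratedDeriv_succ, ih, ((hasDerivAt_cexp_ofReal_mul_I a t).const_mul _).deriv]
    ring

lemma hasTemperateGrowth_cexp_ofReal_mul_I (a : ℝ) :
    (fun t : ℝ ↦ cexp (↑(a * t) * I)).HasTemperateGrowth := by
  refine ⟨?_, fun n ↦ ⟨0, |a| ^ n, fun t ↦ ?_⟩⟩
  · exact contDiff_exp.comp
      ((ofRealCLM.contDiff.comp (contDiff_const.mul contDiff_id)).mul contDiff_const)
  · rw [norm_iteratedFDeriv_eq_norm_iteratedDeriv, iteratedDeriv_cexp_ofReal_mul_I, norm_mul,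
      norm_exp_ofReal_mul_I]
    simp

section

variable {E : Type*} [NormedAddCommGroup E] [InnerProductSpace ℝ E]

def chirp (a : ℝ) (y : E) : ℂ := cexp (↑(a * ‖y‖ ^ 2) * I)

lemma hasTemperateGrowth_chirp (a : ℝ) : (chirp a : E → ℂ).HasTemperateGrowth :=
  (hasTemperateGrowth_cexp_ofReal_mul_I a).comp (Function.hasTemperateGrowth_norm_sq E)

def SchwartzMap.chirpConj (a : ℝ) (g : 𝓢(E, ℂ)) : 𝓢(E, ℂ) :=
  smulLeftCLM ℂ (chirp a) (g.postcompCLM conjCLE.toContinuousLinearMap)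

lemma SchwartzMap.chirpConj_apply (a : ℝ) (g : 𝓢(E, ℂ)) (u : E) :
    g.chirpConj a u = chirp a u * conj (g u) := by
  simp [chirpConj, hasTemperateGrowth_chirp]

lemma fresnel_phase_eq {ℏ : ℝ} (hℏ : ℏ ≠ 0) (x ξ u : E) :
    -(⟪ξ, u + x⟫ / ℏ) + ‖u + x‖ ^ 2 / (2 * ℏ) =
      (‖x‖ ^ 2 / 2 - ⟪ξ, x⟫) / ℏ + -2 * π * ⟪u, -(2 * π * ℏ)⁻¹ • (x - ξ)⟫ +
        (2 * ℏ)⁻¹ * ‖u‖ ^ 2 := by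
  rw [inner_add_right, norm_add_sq_real, inner_smul_right, inner_sub_right, real_inner_comm ξ u]
  field_simp
  ring

end

lemma cexp_stft_phase_mul_Fplus {ℏ : ℝ} (hℏ : ℏ ≠ 0) {d : ℕ} (x ξ u : Ed d) :
    cexp (-(I / ℏ) * ↑⟪ξ, u + x⟫) * Fplus ℏ d (u + x) =
      (((2 * π : ℝ) : ℂ) * I * ℏ) ^ (-(d : ℂ) / 2) *
        cexp (↑((‖x‖ ^ 2 / 2 - ⟪ξ, x⟫) / ℏ : ℝ) * I) *
        (cexp (↑(-2 * π * ⟪u, -(2 * π * ℏ)⁻¹ • (x - ξ)⟫) * I) * chirp (2 * ℏ)⁻¹ u) := by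
  have h := congrArg (fun r : ℝ ↦ (r : ℂ) * I) (fresnel_phase_eq hℏ x ξ u)
  rw [Fplus, chirp, mul_left_comm, ← Complex.exp_add, mul_assoc _ (cexp _), ← Complex.exp_add,
    ← Complex.exp_add]
  congr 2
  push_cast at h ⊢
  linear_combination h

lemma stft_Fplus_eq {ℏ : ℝ} (hℏ : ℏ ≠ 0) {d : ℕ} (g : Ed d → ℂ) (x ξ : Ed d) :
    STFT ℏ g (Fplus ℏ d) x ξ =
      ((2 * π * ℏ : ℝ) : ℂ) ^ (-(d : ℂ) / 2) * (((2 * π : ℝ) : ℂ) * I * ℏ) ^ (-(d : ℂ) / 2) *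
        cexp (↑((‖x‖ ^ 2 / 2 - ⟪ξ, x⟫) / ℏ : ℝ) * I) *
        𝓕 (fun u ↦ chirp (2 * ℏ)⁻¹ u * conj (g u)) (-(2 * π * ℏ)⁻¹ • (x - ξ)) := by
  rw [STFT, Real.fourier_eq', ← integral_add_right_eq_self _ x, ← integral_const_mul,
    ← integral_const_mul]
  congr 1 with u
  rw [add_sub_cancel_right, cexp_stft_phase_mul_Fplus hℏ, smul_eq_mul]
  ring

lemma SchwartzMap.exists_norm_le_mul_inv_one_add_norm_sq_pow {E F : Type*}
    [NormedAddCommGroup E] [NormedSpace ℝ E] [NormedAddCommGroup F] [NormedSpace ℝ F]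
    (f : 𝓢(E, F)) (N : ℕ) : ∃ C, 0 < C ∧ ∀ x, ‖f x‖ ≤ C * ((1 + ‖x‖ ^ 2) ^ N)⁻¹ := by
  set S := 2 ^ (2 * N) * (Finset.Iic (2 * N, 0)).sup (fun m ↦ SchwartzMap.seminorm ℝ m.1 m.2) f
  refine ⟨S + 1, by positivity, fun x ↦ ?_⟩
  have hdecay := f.one_add_le_sup_seminorm_apply (𝕜 := ℝ) (m := (2 * N, 0)) le_rfl le_rfl x
  rw [norm_iteratedFDeriv_zero] at hdecay
  have hpow : (1 + ‖x‖ ^ 2) ^ N ≤ (1 + ‖x‖) ^ (2 * N) := by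
    rw [pow_mul]
    gcongr
    nlinarith [norm_nonneg x]
  rw [le_mul_inv_iff₀ (by positivity)]
  calc ‖f x‖ * (1 + ‖x‖ ^ 2) ^ N ≤ (1 + ‖x‖) ^ (2 * N) * ‖f x‖ := by rw [mul_comm]; gcongr
    _ ≤ S := hdecay
    _ ≤ S + 1 := by linarith

/-- Schwartz decay of the STFT of the Fresnel function along the anti-diagonal. -/
theorem stft_fresnel_antidiagonal_decay (ℏ : ℝ) (hℏ : 0 < ℏ) (d : ℕ)
    (g : SchwartzMap (Ed d) ℂ) (N : ℕ) :
    ∃ C : ℝ, 0 < C ∧ ∀ x ξ : Ed d,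
      ‖STFT ℏ (fun y => g y) (Fplus ℏ d) x ξ‖ ≤ C * ((1 + ‖x - ξ‖ ^ 2) ^ N)⁻¹ := by
  have hc : -(2 * π * ℏ)⁻¹ ≠ 0 := by simp [hℏ.ne', Real.pi_ne_zero]
  set K := ‖((2 * π * ℏ : ℝ) : ℂ) ^ (-(d : ℂ) / 2)‖ *
    ‖(((2 * π : ℝ) : ℂ) * I * ℏ) ^ (-(d : ℂ) / 2)‖
  have hK : 0 < K := by
    have h2πℏ : (0 : ℝ) < 2 * π * ℏ := by positivity
    apply mul_pos <;> refine norm_pos_iff.2 (cpow_ne_zero_iff.2 (.inl ?_))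
    · exact_mod_cast h2πℏ.ne'
    · simp [hℏ.ne', Real.pi_ne_zero]
  obtain ⟨C, hC, hdecay⟩ := (SchwartzMap.compCLMOfContinuousLinearEquiv ℂ
    (ContinuousLinearEquiv.smulLeft (R₁ := ℝ) (Units.mk0 _ hc))
    (𝓕 (g.chirpConj (2 * ℏ)⁻¹))).exists_norm_le_mul_inv_one_add_norm_sq_pow N
  have hφ : ⇑(g.chirpConj (2 * ℏ)⁻¹) = fun u ↦ chirp (2 * ℏ)⁻¹ u * conj (g u) :=
    funext (g.chirpConj_apply _)
  refine ⟨K * C, by positivity, fun x ξ ↦ ?_⟩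
  calc ‖STFT ℏ (fun y ↦ g y) (Fplus ℏ d) x ξ‖
      = K * ‖𝓕 (fun u ↦ chirp (2 * ℏ)⁻¹ u * conj (g u)) (-(2 * π * ℏ)⁻¹ • (x - ξ))‖ := by
        rw [stft_Fplus_eq hℏ.ne', norm_mul, norm_mul, norm_mul, norm_exp_ofReal_mul_I, mul_one]
    _ ≤ K * (C * ((1 + ‖x - ξ‖ ^ 2) ^ N)⁻¹) := by
        gcongr
        simpa only [SchwartzMap.compCLMOfContinuousLinearEquiv_apply, Function.comp_apply,
          ContinuousLinearEquiv.smulLeft_apply_apply, Units.smul_mk0, SchwartzMap.fourier_coe, hφ]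
          using hdecay (x - ξ)
    _ = K * C * ((1 + ‖x - ξ‖ ^ 2) ^ N)⁻¹ := (mul_assoc _ _ _).symm
end
end

section
/- Uniform dilation bound: let φ ∈ S(ℝ^d), g ∈ S(ℝ^d), and for 0 < ε < 1 set φ_ε(y) = φ(εy). Then for every N ∈ ℕ there exists C_N > 0, independent of ε, such that sup_{x ∈ ℝ^d} |V_g φ_ε(x,ξ)| ≤ C_N (1+|ξ|²)^{-N} for all ξ ∈ ℝ^d. -/
open MeasureTheory Complex Filter
open scoped RealInnerProductSpace ENNReal Topology

noncomputable section

/-! `V_g φ_ε (x, ξ)` is, up to the factor `(2πℏ)^(-d/2)`, the Fourier transform of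
`h y = φ (ε y) * conj (g (y - x))` at `ξ / (2πℏ)`, and `(1 + ‖w‖²)^N ‖𝓕 h w‖` is bounded by the
`L¹` norms of the first `2N` derivatives of `h`. By Leibniz's rule these are bounded by sup norms
of derivatives of `φ_ε` times `L¹` norms of derivatives of `g`. Translation does not change the
latter, and since `D^i φ_ε = ε^i (D^i φ)(ε ·)` with `ε < 1`, the former are bounded by Schwartz
seminorms of `φ`: the bound is uniform in `ε` and `x`. -/

open scoped FourierTransform ComplexConjugate SchwartzMap ContDiff

section FourierDecay

variable {V E : Type*} [NormedAddCommGroup V] [InnerProductSpace ℝ V] [FiniteDimensional ℝ V]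
  [MeasurableSpace V] [BorelSpace V] [NormedAddCommGroup E] [NormedSpace ℂ E]

theorem Real.pow_mul_norm_fourier_le {f : V → E} {n : ℕ} (hf : ContDiff ℝ n f)
    (h'f : ∀ m ≤ n, Integrable (fun v => ‖iteratedFDeriv ℝ m f v‖)) (w : V) :
    ‖w‖ ^ n * ‖𝓕 f w‖ ≤ 2 ^ n * ∑ m ∈ Finset.range (n + 1), ∫ v, ‖iteratedFDeriv ℝ m f v‖ := by
  have key := Real.pow_mul_norm_iteratedFDeriv_fourier_le (K := 0) hf
    (fun k m hk hm => by simpa [show k = 0 by simpa using hk] using h'f m (by exact_mod_cast hm))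
    le_rfl le_rfl w
  simpa [Finset.range_one, Finset.singleton_product, Finset.sum_map] using key

theorem Real.one_add_norm_smul_sq_pow_mul_norm_fourier_le {f : V → E} {N : ℕ}
    (hf : ContDiff ℝ (2 * N) f)
    (h'f : ∀ m ≤ 2 * N, Integrable (fun v => ‖iteratedFDeriv ℝ m f v‖)) (a : ℝ) (w : V) :
    (1 + ‖a • w‖ ^ 2) ^ N * ‖𝓕 f w‖ ≤ 2 ^ N * (1 + (2 * a) ^ (2 * N)) *
      ∑ m ∈ Finset.range (2 * N + 1), ∫ v, ‖iteratedFDeriv ℝ m f v‖ := by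
  set S := ∑ m ∈ Finset.range (2 * N + 1), ∫ v, ‖iteratedFDeriv ℝ m f v‖
  have h_zero : ‖𝓕 f w‖ ≤ S := by
    have h0 := Real.pow_mul_norm_fourier_le (n := 0) (hf.of_le (by positivity))
      (fun m hm => h'f m (by omega)) w
    simp only [pow_zero, one_mul, zero_add, Finset.range_one, Finset.sum_singleton] at h0
    exact h0.trans (Finset.single_le_sum (f := fun m => ∫ v, ‖iteratedFDeriv ℝ m f v‖)
      (fun m _ => integral_nonneg fun _ => norm_nonneg _) (Finset.mem_range.mpr (Nat.succ_pos _)))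
  have h_top : ‖w‖ ^ (2 * N) * ‖𝓕 f w‖ ≤ 2 ^ (2 * N) * S :=
    Real.pow_mul_norm_fourier_le hf h'f w
  have h_weight : (1 + ‖a • w‖ ^ 2) ^ N ≤ 2 ^ N * (1 + ‖a • w‖ ^ (2 * N)) := by
    calc (1 + ‖a • w‖ ^ 2) ^ N ≤ 2 ^ (N - 1) * (1 ^ N + (‖a • w‖ ^ 2) ^ N) :=
          add_pow_le zero_le_one (by positivity) N
      _ ≤ 2 ^ N * (1 + ‖a • w‖ ^ (2 * N)) := by
          rw [one_pow, ← pow_mul, mul_comm 2 N]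
          gcongr
          · exact one_le_two
          · exact N.sub_le 1
  have h_norm : ‖a • w‖ ^ (2 * N) = a ^ (2 * N) * ‖w‖ ^ (2 * N) := by
    rw [norm_smul, mul_pow, Real.norm_eq_abs, (even_two_mul N).pow_abs]
  calc (1 + ‖a • w‖ ^ 2) ^ N * ‖𝓕 f w‖
      ≤ 2 ^ N * (1 + ‖a • w‖ ^ (2 * N)) * ‖𝓕 f w‖ := by gcongr
    _ = 2 ^ N * (‖𝓕 f w‖ + a ^ (2 * N) * (‖w‖ ^ (2 * N) * ‖𝓕 f w‖)) := by rw [h_norm]; ring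
    _ ≤ 2 ^ N * (S + a ^ (2 * N) * (2 ^ (2 * N) * S)) := by
        gcongr; exact (even_two_mul N).pow_nonneg a
    _ = 2 ^ N * (1 + (2 * a) ^ (2 * N)) * S := by ring

end FourierDecay

theorem norm_iteratedFDeriv_comp_smul_le {E F : Type*} [NormedAddCommGroup E] [NormedSpace ℝ E]
    [NormedAddCommGroup F] [NormedSpace ℝ F] {f : E → F} {i : ℕ} (hf : ContDiff ℝ i f)
    {a : ℝ} (ha : |a| ≤ 1) (y : E) :
    ‖iteratedFDeriv ℝ i (fun z => f (a • z)) y‖ ≤ ‖iteratedFDeriv ℝ i f (a • y)‖ := by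
  rw [iteratedFDeriv_comp_const_smul a hf, norm_smul, norm_pow, Real.norm_eq_abs]
  exact mul_le_of_le_one_left (norm_nonneg _) (pow_le_one₀ (abs_nonneg a) ha)

section Leibniz

variable {V : Type*} [NormedAddCommGroup V] [NormedSpace ℝ V]

theorem ContDiff.conj_comp_sub {g : V → ℂ} {n : ℕ∞ω} (hg : ContDiff ℝ n g) (x : V) :
    ContDiff ℝ n (fun z => conj (g (z - x))) :=
  conjCLE.contDiff.comp (hg.comp (contDiff_id.sub contDiff_const))

theorem norm_iteratedFDeriv_conj_comp_sub (g : V → ℂ) (x y : V) (j : ℕ) :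
    ‖iteratedFDeriv ℝ j (fun z => conj (g (z - x))) y‖ = ‖iteratedFDeriv ℝ j g (y - x)‖ := by
  rw [show (fun z => conj (g (z - x))) = conjLIE ∘ fun z => g (z - x) from rfl,
    LinearIsometryEquiv.norm_iteratedFDeriv_comp_left, iteratedFDeriv_comp_sub]

theorem norm_iteratedFDeriv_mul_conj_comp_sub_le {f g : V → ℂ} {m : ℕ} (hf : ContDiff ℝ m f)
    (hg : ContDiff ℝ m g) {M : ℕ → ℝ} (hM : ∀ i ≤ m, ∀ y, ‖iteratedFDeriv ℝ i f y‖ ≤ M i)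
    (x y : V) :
    ‖iteratedFDeriv ℝ m (fun z => f z * conj (g (z - x))) y‖ ≤
      ∑ i ∈ Finset.range (m + 1),
        (m.choose i : ℝ) * M i * ‖iteratedFDeriv ℝ (m - i) g (y - x)‖ := by
  refine (norm_iteratedFDeriv_mul_le hf (hg.conj_comp_sub x) y le_rfl).trans
    (Finset.sum_le_sum fun i hi => ?_)
  rw [norm_iteratedFDeriv_conj_comp_sub]
  gcongr
  exact hM i (Nat.lt_succ_iff.mp (Finset.mem_range.mp hi)) y

variable [MeasurableSpace V] [BorelSpace V] [SecondCountableTopology V] {μ : Measure V}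
  [μ.HasTemperateGrowth] [μ.IsAddRightInvariant]

theorem SchwartzMap.integrable_norm_iteratedFDeriv_comp_sub {F : Type*} [NormedAddCommGroup F]
    [NormedSpace ℝ F] (g : 𝓢(V, F)) (x : V) (j : ℕ) :
    Integrable (fun y => ‖iteratedFDeriv ℝ j g (y - x)‖) μ := by
  simpa using (g.integrable_pow_mul_iteratedFDeriv μ 0 j).comp_sub_right x

theorem integrable_norm_iteratedFDeriv_mul_conj_comp_sub {f : V → ℂ} {m : ℕ}
    (hf : ContDiff ℝ m f) {M : ℕ → ℝ} (hM : ∀ i ≤ m, ∀ y, ‖iteratedFDeriv ℝ i f y‖ ≤ M i)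
    (g : 𝓢(V, ℂ)) (x : V) :
    Integrable (fun y => ‖iteratedFDeriv ℝ m (fun z => f z * conj (g (z - x))) y‖) μ := by
  have hg : ContDiff ℝ m g := g.smooth m
  have h_cont : Continuous (iteratedFDeriv ℝ m (fun z => f z * conj (g (z - x)))) :=
    (hf.mul (hg.conj_comp_sub x)).continuous_iteratedFDeriv le_rfl
  have h_major : Integrable (fun y => ∑ i ∈ Finset.range (m + 1),
      (m.choose i : ℝ) * M i * ‖iteratedFDeriv ℝ (m - i) g (y - x)‖) μ :=
    integrable_finsetSum _ fun i _ => (g.integrable_norm_iteratedFDeriv_comp_sub x _).const_mul _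
  exact h_major.mono' h_cont.norm.aestronglyMeasurable (Eventually.of_forall fun y => by
    simpa only [norm_norm] using norm_iteratedFDeriv_mul_conj_comp_sub_le hf hg hM x y)

theorem integral_norm_iteratedFDeriv_mul_conj_comp_sub_le {f : V → ℂ} {m : ℕ}
    (hf : ContDiff ℝ m f) {M : ℕ → ℝ} (hM : ∀ i ≤ m, ∀ y, ‖iteratedFDeriv ℝ i f y‖ ≤ M i)
    (g : 𝓢(V, ℂ)) (x : V) :
    ∫ y, ‖iteratedFDeriv ℝ m (fun z => f z * conj (g (z - x))) y‖ ∂μ ≤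
      ∑ i ∈ Finset.range (m + 1),
        (m.choose i : ℝ) * M i * ∫ z, ‖iteratedFDeriv ℝ (m - i) g z‖ ∂μ := by
  have hg : ContDiff ℝ m g := g.smooth m
  have h_summand (i : ℕ) : Integrable
      (fun y => (m.choose i : ℝ) * M i * ‖iteratedFDeriv ℝ (m - i) g (y - x)‖) μ :=
    (g.integrable_norm_iteratedFDeriv_comp_sub x _).const_mul _
  calc ∫ y, ‖iteratedFDeriv ℝ m (fun z => f z * conj (g (z - x))) y‖ ∂μ
      ≤ ∫ y, ∑ i ∈ Finset.range (m + 1),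
          (m.choose i : ℝ) * M i * ‖iteratedFDeriv ℝ (m - i) g (y - x)‖ ∂μ :=
        integral_mono (integrable_norm_iteratedFDeriv_mul_conj_comp_sub hf hM g x)
          (integrable_finsetSum _ fun i _ => h_summand i)
          (norm_iteratedFDeriv_mul_conj_comp_sub_le hf hg hM x)
    _ = _ := by
        rw [integral_finsetSum _ fun i _ => h_summand i]
        refine Finset.sum_congr rfl fun i _ => ?_
        rw [integral_const_mul, integral_sub_right_eq_self
          (fun z => ‖iteratedFDeriv ℝ (m - i) g z‖) x]

end Leibniz

theorem STFT_eq_fourier (ℏ : ℝ) {d : ℕ} (g f : Ed d → ℂ) (x ξ : Ed d) :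
    STFT ℏ g f x ξ = (((2 * Real.pi * ℏ : ℝ) : ℂ)) ^ (-(d : ℂ) / 2) *
      𝓕 (fun y => f y * conj (g (y - x))) ((2 * Real.pi * ℏ)⁻¹ • ξ) := by
  rw [STFT, Real.fourier_eq']
  congr 1
  refine integral_congr_ae (Eventually.of_forall fun y => ?_)
  have h_phase : ((-2 * Real.pi * ⟪y, (2 * Real.pi * ℏ)⁻¹ • ξ⟫ : ℝ) : ℂ) * I
      = -(I / (ℏ : ℂ)) * ((⟪ξ, y⟫ : ℝ) : ℂ) := by
    rw [real_inner_smul_right, real_inner_comm]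
    push_cast
    field_simp
  dsimp only
  rw [smul_eq_mul, h_phase, mul_assoc]

/-- uniform dilation bound for the STFT of dilated Schwartz functions. -/
theorem stft_dilation_uniform_bound (ℏ : ℝ) (hℏ : 0 < ℏ) (d : ℕ)
    (φ g : SchwartzMap (Ed d) ℂ) (N : ℕ) :
    ∃ C : ℝ, 0 < C ∧ ∀ ε : ℝ, 0 < ε → ε < 1 → ∀ x ξ : Ed d,
      ‖STFT ℏ (fun y => g y) (fun y => φ (ε • y)) x ξ‖ ≤ C * ((1 + ‖ξ‖ ^ 2) ^ N)⁻¹ := by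
  set a := 2 * Real.pi * ℏ
  set c : ℂ := ((a : ℝ) : ℂ) ^ (-(d : ℂ) / 2)
  set M : ℕ → ℝ := fun i => SchwartzMap.seminorm ℝ 0 i φ
  set T := ∑ m ∈ Finset.range (2 * N + 1), ∑ i ∈ Finset.range (m + 1),
    (m.choose i : ℝ) * M i * ∫ z, ‖iteratedFDeriv ℝ (m - i) g z‖
  refine ⟨‖c‖ * (2 ^ N * (1 + (2 * a) ^ (2 * N)) * T) + 1, by positivity, ?_⟩
  intro ε hε0 hε1 x ξ
  set h := fun y => φ (ε • y) * conj (g (y - x))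
  have h_finite (m : ℕ) : (m : ℕ∞ω) ≤ (∞ : ℕ∞ω) := mod_cast le_top
  have hφε : ContDiff ℝ ∞ (fun y : Ed d => φ (ε • y)) :=
    (φ.smooth ⊤).comp (contDiff_id.const_smul ε)
  have hφε_le (i : ℕ) (y : Ed d) : ‖iteratedFDeriv ℝ i (fun y => φ (ε • y)) y‖ ≤ M i :=
    (norm_iteratedFDeriv_comp_smul_le (φ.smooth i) (by rw [abs_of_pos hε0]; exact hε1.le) y).trans
      (φ.norm_iteratedFDeriv_le_seminorm ℝ i _)
  have h_int (m : ℕ) : Integrable (fun y => ‖iteratedFDeriv ℝ m h y‖) :=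
    integrable_norm_iteratedFDeriv_mul_conj_comp_sub (hφε.of_le (h_finite m))
      (fun i _ => hφε_le i) g x
  have h_sum : ∑ m ∈ Finset.range (2 * N + 1), ∫ y, ‖iteratedFDeriv ℝ m h y‖ ≤ T :=
    Finset.sum_le_sum fun m _ => integral_norm_iteratedFDeriv_mul_conj_comp_sub_le
      (hφε.of_le (h_finite m)) (fun i _ => hφε_le i) g x
  have h_decay := Real.one_add_norm_smul_sq_pow_mul_norm_fourier_le
    ((hφε.mul ((g.smooth ⊤).conj_comp_sub x)).of_le (h_finite (2 * N))) (fun m _ => h_int m)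
    a (a⁻¹ • ξ)
  rw [smul_inv_smul₀ (by positivity)] at h_decay
  rw [STFT_eq_fourier, norm_mul, ← div_eq_mul_inv, le_div_iff₀ (by positivity)]
  calc ‖c‖ * ‖𝓕 h (a⁻¹ • ξ)‖ * (1 + ‖ξ‖ ^ 2) ^ N
      = ‖c‖ * ((1 + ‖ξ‖ ^ 2) ^ N * ‖𝓕 h (a⁻¹ • ξ)‖) := by ring
    _ ≤ ‖c‖ * (2 ^ N * (1 + (2 * a) ^ (2 * N)) * T) := by
        gcongr ‖c‖ * ?_
        exact h_decay.trans (mul_le_mul_of_nonneg_left h_sum (by positivity))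
    _ ≤ _ := le_add_of_nonneg_right zero_le_one
end
end

section
/- Parseval-type formula for Fourier transforms of measures: if μ is a finite complex Borel measure on ℝ^d and f(x) = ∫_{ℝ^d} e^{i ξ·x} dμ(ξ), then f is Fresnel integrable and the Fresnel integral lim_{ε↓0} (2πiℏ)^{-d/2} ∫ e^{i|x|²/(2ℏ)} f(x)φ(εx) dx (for any φ ∈ S(ℝ^d) with φ(0)=1) equals ∫_{ℝ^d} e^{-iℏ|x|²/2} dμ(x). -/
open MeasureTheory Complex Filter
open scoped RealInnerProductSpace ENNReal Topology

noncomputable section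

/-!
Write the complex measure as `ρ dν`. By Fubini, the regularised Fresnel integral of `f` is
`∫ I_ε(ξ) ρ(ξ) dν(ξ)`, where `I_ε(ξ)` is the regularised Fresnel integral of the plane wave
`x ↦ e^{i ξ·x} φ(εx)`. The multiplication formula `∫ γ_b · 𝓕g = ∫ 𝓕γ_b · g` for the Gaussian
`γ_b(x) = e^{-b|x|²}`, continued by dominated convergence from `0 < Re b` to `b = 2π²ℏi`, moves
each `I_ε(ξ)` to the Fourier side. There `𝓕` of the modulated dilate of `φ` is a translated
rescaling of `𝓕φ`, so `I_ε(ξ) = ∫ e^{-2π²ℏi |ξ/2π + εu|²} 𝓕φ(u) du`. This is bounded by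
`‖𝓕φ‖₁` and tends to `e^{-iℏ|ξ|²/2} ∫ 𝓕φ = e^{-iℏ|ξ|²/2} φ(0)` as `ε → 0`, and dominated
convergence in `ξ` concludes.
-/

open FourierTransform Real Module
open scoped SchwartzMap

theorem tendsto_integral_mul_of_norm_le {ι α : Type*} [MeasurableSpace α] {μ : Measure α}
    {l : Filter ι} [l.IsCountablyGenerated] {F : ι → α → ℂ} {F₀ h : α → ℂ} {C : ℝ}
    (hh : Integrable h μ) (hF_meas : ∀ᶠ i in l, AEStronglyMeasurable (F i) μ)
    (hF_le : ∀ᶠ i in l, ∀ x, ‖F i x‖ ≤ C) (hF : ∀ x, Tendsto (fun i ↦ F i x) l (𝓝 (F₀ x))) :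
    Tendsto (fun i ↦ ∫ x, F i x * h x ∂μ) l (𝓝 (∫ x, F₀ x * h x ∂μ)) := by
  refine tendsto_integral_filter_of_dominated_convergence (fun x ↦ C * ‖h x‖)
    (hF_meas.mono fun i hi ↦ hi.mul hh.1) (hF_le.mono fun i hi ↦ ae_of_all _ fun x ↦ ?_)
    (hh.norm.const_mul C) (ae_of_all _ fun x ↦ (hF x).mul_const (h x))
  rw [norm_mul]
  exact mul_le_mul_of_nonneg_right (hi x) (norm_nonneg _)

theorem norm_cexp_neg_mul_sq_le_one {b : ℂ} (hb : 0 ≤ b.re) (t : ℝ) :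
    ‖cexp (-b * (t : ℂ) ^ 2)‖ ≤ 1 := by
  rw [norm_exp, Real.exp_le_one_iff, ← ofReal_pow, neg_mul, neg_re, re_mul_ofReal]
  exact neg_nonpos.2 (mul_nonneg hb (sq_nonneg t))

theorem norm_cexp_neg_mul_sq_mul_le {b : ℂ} (hb : 0 ≤ b.re) (t : ℝ) (z : ℂ) :
    ‖cexp (-b * (t : ℂ) ^ 2) * z‖ ≤ ‖z‖ := by
  rw [norm_mul]
  exact mul_le_of_le_one_left (norm_nonneg z) (norm_cexp_neg_mul_sq_le_one hb t)

theorem re_ofReal_div_nonneg {x : ℝ} (hx : 0 ≤ x) {b : ℂ} (hb : 0 ≤ b.re) :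
    0 ≤ ((x : ℂ) / b).re := by
  rw [div_eq_mul_inv, re_ofReal_mul, inv_re]
  exact mul_nonneg hx (div_nonneg hb (normSq_nonneg b))

theorem norm_cexp_I_mul_ofReal_div_two_mul (t ℏ : ℝ) : ‖cexp (I * t / (2 * ℏ))‖ = 1 := by
  simp [norm_exp, div_re]

section InnerProductSpace

variable {V : Type*} [NormedAddCommGroup V] [InnerProductSpace ℝ V] [FiniteDimensional ℝ V]
  [MeasurableSpace V] [BorelSpace V]

theorem integral_cexp_neg_mul_sq_norm_mul_fourier {b : ℂ} (hb : 0 < b.re)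
    {g : V → ℂ} (hg : Integrable g) :
    ∫ x, cexp (-b * ‖x‖ ^ 2) * 𝓕 g x
      = (π / b) ^ (finrank ℝ V / 2 : ℂ) * ∫ k, cexp (-π ^ 2 * ‖k‖ ^ 2 / b) * g k := by
  have hgauss : Integrable (fun v : V ↦ cexp (-b * ‖v‖ ^ 2)) := by
    simpa using GaussianFourier.integrable_cexp_neg_mul_sq_norm_add hb 0 (0 : V)
  have := VectorFourier.integral_fourierIntegral_smul_eq_flip (L := innerₗ V)
    Real.continuous_fourierChar continuous_inner hgauss hg
  simp only [flip_innerₗ, smul_eq_mul] at this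
  change ∫ k, 𝓕 (fun v : V ↦ cexp (-b * ‖v‖ ^ 2)) k * g k = _ at this
  simp only [fourier_gaussian_innerProductSpace hb, mul_assoc] at this
  rw [← integral_const_mul]
  exact this.symm

theorem integral_cexp_neg_mul_sq_norm_mul_fourier_of_re_nonneg {b : ℂ}
    (hb : 0 ≤ b.re) (hb₀ : b ≠ 0) {g : V → ℂ} (hg : Integrable g) (hFg : Integrable (𝓕 g)) :
    ∫ x, cexp (-b * ‖x‖ ^ 2) * 𝓕 g x
      = (π / b) ^ (finrank ℝ V / 2 : ℂ) * ∫ k, cexp (-π ^ 2 * ‖k‖ ^ 2 / b) * g k := by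
  set l := 𝓝[>] (0 : ℝ)
  have hlim : Tendsto (fun δ : ℝ ↦ b + δ) l (𝓝 b) := by
    simpa using tendsto_const_nhds.add
      ((continuous_ofReal.tendsto 0).mono_left (nhdsWithin_le_nhds (s := Set.Ioi 0)))
  have hre : ∀ᶠ δ : ℝ in l, 0 ≤ (b + δ).re :=
    eventually_nhdsWithin_of_forall fun δ (hδ : 0 < δ) ↦ by simpa using add_nonneg hb hδ.le
  have hslit : (π : ℂ) / b ∈ slitPlane := by
    have hre : 0 ≤ ((π : ℂ) / b).re := re_ofReal_div_nonneg pi_pos.le hb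
    have hne : (π : ℂ) / b ≠ 0 := div_ne_zero (ofReal_ne_zero.2 pi_ne_zero) hb₀
    rw [mem_slitPlane_iff]
    rcases hre.lt_or_eq with h | h
    · exact Or.inl h
    · exact Or.inr fun him ↦ hne (ext h.symm him)
  have hconst : Tendsto (fun δ : ℝ ↦ (π / (b + δ)) ^ (finrank ℝ V / 2 : ℂ)) l
      (𝓝 ((π / b) ^ (finrank ℝ V / 2 : ℂ))) :=
    (tendsto_const_nhds.div hlim hb₀).cpow tendsto_const_nhds hslit
  have hleft : Tendsto (fun δ : ℝ ↦ ∫ k, cexp (-π ^ 2 * ‖k‖ ^ 2 / (b + δ)) * g k) l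
      (𝓝 (∫ k, cexp (-π ^ 2 * ‖k‖ ^ 2 / b) * g k)) := by
    refine tendsto_integral_mul_of_norm_le (C := 1) hg (Eventually.of_forall fun δ ↦ ?_)
      (hre.mono fun δ hδ k ↦ ?_) fun k ↦ (tendsto_const_nhds.div hlim hb₀).cexp
    · exact (by fun_prop : Continuous _).aestronglyMeasurable
    · have h := norm_cexp_neg_mul_sq_le_one
        (re_ofReal_div_nonneg (sq_nonneg π) hδ) ‖k‖
      convert h using 3
      push_cast
      ring
  have hright : Tendsto (fun δ : ℝ ↦ ∫ x, cexp (-(b + δ) * ‖x‖ ^ 2) * 𝓕 g x) l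
      (𝓝 (∫ x, cexp (-b * ‖x‖ ^ 2) * 𝓕 g x)) :=
    tendsto_integral_mul_of_norm_le hFg
      (Eventually.of_forall fun δ ↦ (by fun_prop : Continuous _).aestronglyMeasurable)
      (hre.mono fun δ hδ x ↦ norm_cexp_neg_mul_sq_le_one hδ ‖x‖)
      fun x ↦ (hlim.neg.mul_const _).cexp
  refine tendsto_nhds_unique (hright.congr' ?_) (hconst.mul hleft)
  filter_upwards [self_mem_nhdsWithin] with δ (hδ : 0 < δ)
  exact integral_cexp_neg_mul_sq_norm_mul_fourier (by simpa using add_pos_of_nonneg_of_pos hb hδ) hg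

theorem integral_fourier_eq_apply_zero {E : Type*} [NormedAddCommGroup E] [NormedSpace ℂ E]
    [CompleteSpace E] (φ : 𝓢(V, E)) : ∫ u, 𝓕 (φ : V → E) u = φ 0 := by
  have h := congrArg (fun ψ : 𝓢(V, E) ↦ ψ 0)
    (FourierTransform.fourierInv_fourier_eq (F := 𝓢(V, E)) φ)
  simp only [SchwartzMap.fourierInv_coe, SchwartzMap.fourier_coe, fourierInv_eq] at h
  simpa using h

section Modulation

variable {E : Type*} [NormedAddCommGroup E] [NormedSpace ℂ E]

theorem fourier_modulate_dilate {ε : ℝ} (hε : ε ≠ 0) (a : V) (ψ : V → E) (x : V) :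
    𝓕 (fun v ↦ 𝐞 ⟪v, a⟫ • ψ (ε • v)) x = |(ε ^ finrank ℝ V)⁻¹| • 𝓕 ψ (ε⁻¹ • (x - a)) := by
  rw [fourier_eq, fourier_eq, ← Measure.integral_comp_smul]
  congr 1 with v
  rw [smul_smul, ← AddChar.map_add_eq_mul, real_inner_smul_left, real_inner_smul_right,
    ← mul_assoc, mul_inv_cancel₀ hε, one_mul, inner_sub_right]
  ring_nf

theorem integrable_modulate_dilate {ε : ℝ} (hε : ε ≠ 0) (a : V) {ψ : V → E}
    (hψ : Integrable ψ) : Integrable (fun v ↦ 𝐞 ⟪v, a⟫ • ψ (ε • v)) := by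
  simpa using (fourierIntegral_convergent_iff (-a)).2 (hψ.comp_smul hε)

theorem integrable_fourier_modulate_dilate {ε : ℝ} (hε : ε ≠ 0) (a : V) {ψ : V → E}
    (hψ : Integrable (𝓕 ψ)) : Integrable (𝓕 (fun v ↦ 𝐞 ⟪v, a⟫ • ψ (ε • v))) := by
  simp_rw [funext (fourier_modulate_dilate hε a ψ)]
  exact ((hψ.comp_smul (inv_ne_zero hε)).comp_sub_right a).smul _

theorem integral_smul_fourier_modulate_dilate [CompleteSpace E] {ε : ℝ} (hε : ε ≠ 0) (a : V)
    (ψ : V → E) (Φ : V → ℂ) :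
    ∫ x, Φ x • 𝓕 (fun v ↦ 𝐞 ⟪v, a⟫ • ψ (ε • v)) x = ∫ u, Φ (a + ε • u) • 𝓕 ψ u := by
  set c := |(ε ^ finrank ℝ V)⁻¹|
  have hc : c ≠ 0 := by positivity
  calc ∫ x, Φ x • 𝓕 (fun v ↦ 𝐞 ⟪v, a⟫ • ψ (ε • v)) x
      = ∫ x, Φ x • c • 𝓕 ψ (ε⁻¹ • (x - a)) := by simp_rw [fourier_modulate_dilate hε, c]
    _ = ∫ u, Φ (a + u) • c • 𝓕 ψ (ε⁻¹ • u) := by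
        simpa using (integral_add_left_eq_self (fun x ↦ Φ x • c • 𝓕 ψ (ε⁻¹ • (x - a))) a).symm
    _ = c⁻¹ • ∫ u, Φ (a + ε • u) • c • 𝓕 ψ (ε⁻¹ • ε • u) := by
        rw [Measure.integral_comp_smul (μ := volume)
          (f := fun u ↦ Φ (a + u) • c • 𝓕 ψ (ε⁻¹ • u)), inv_smul_smul₀ hc]
    _ = ∫ u, Φ (a + ε • u) • 𝓕 ψ u := by
        simp_rw [inv_smul_smul₀ hε, smul_comm (Φ _) c, integral_smul, inv_smul_smul₀ hc]

end Modulation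

section GaussianAverage

variable {b : ℂ} {ψ : V → ℂ}

theorem continuous_integral_gaussian_add_smul_mul (hb : 0 ≤ b.re) (hψ : Integrable ψ) (ε : ℝ) :
    Continuous fun a : V ↦ ∫ u, cexp (-b * ‖a + ε • u‖ ^ 2) * ψ u :=
  continuous_of_dominated (fun a ↦ (by fun_prop : Continuous _).aestronglyMeasurable.mul hψ.1)
    (fun a ↦ ae_of_all _ fun u ↦ norm_cexp_neg_mul_sq_mul_le hb _ _) hψ.norm
    (ae_of_all _ fun _ ↦ by fun_prop)

theorem norm_integral_gaussian_add_smul_mul_le (hb : 0 ≤ b.re) (hψ : Integrable ψ) (ε : ℝ)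
    (a : V) :
    ‖∫ u, cexp (-b * ‖a + ε • u‖ ^ 2) * ψ u‖ ≤ ∫ u, ‖ψ u‖ :=
  norm_integral_le_of_norm_le hψ.norm <| ae_of_all _ fun _ ↦ norm_cexp_neg_mul_sq_mul_le hb _ _

theorem tendsto_integral_gaussian_add_smul_mul (hb : 0 ≤ b.re) (hψ : Integrable ψ) (a : V) :
    Tendsto (fun ε : ℝ ↦ ∫ u, cexp (-b * ‖a + ε • u‖ ^ 2) * ψ u) (𝓝 0)
      (𝓝 (cexp (-b * ‖a‖ ^ 2) * ∫ u, ψ u)) := by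
  rw [← integral_const_mul]
  exact tendsto_integral_mul_of_norm_le (C := 1) hψ
    (Eventually.of_forall fun ε ↦ (by fun_prop : Continuous _).aestronglyMeasurable)
    (Eventually.of_forall fun ε u ↦ norm_cexp_neg_mul_sq_le_one hb _)
    fun u ↦ (by fun_prop : Continuous fun ε : ℝ ↦ cexp (-b * ‖a + ε • u‖ ^ 2)).tendsto' 0 _
      (by simp)

end GaussianAverage

theorem integral_mul_integral_cexp_inner_mul {ν : Measure V} [SFinite ν] {ρ : V → ℂ}
    (hρ : Integrable ρ ν) {w ψ : V → ℂ} {C : ℝ} (hw : Continuous w) (hwC : ∀ x, ‖w x‖ ≤ C)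
    (hψ : Integrable ψ) :
    ∫ x, w x * (∫ ξ, cexp (I * ⟪ξ, x⟫) * ρ ξ ∂ν) * ψ x
      = ∫ ξ, (∫ x, w x * (cexp (I * ⟪ξ, x⟫) * ψ x)) * ρ ξ ∂ν := by
  have hint : Integrable (fun p : V × V ↦ w p.1 * (cexp (I * ⟪p.2, p.1⟫) * ρ p.2) * ψ p.1)
      (volume.prod ν) := by
    refine ((hψ.norm.mul_prod hρ.norm).const_mul C).mono' ?_ (ae_of_all _ fun p ↦ ?_)
    · exact ((hw.comp continuous_fst).aestronglyMeasurable.mul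
        ((by fun_prop : Continuous fun p : V × V ↦ cexp (I * ⟪p.2, p.1⟫)).aestronglyMeasurable.mul
          hρ.1.comp_snd)).mul hψ.1.comp_fst
    · simp only [norm_mul, norm_exp_I_mul_ofReal, one_mul]
      calc ‖w p.1‖ * ‖ρ p.2‖ * ‖ψ p.1‖ ≤ C * ‖ρ p.2‖ * ‖ψ p.1‖ := by gcongr; exact hwC _
        _ = C * (‖ψ p.1‖ * ‖ρ p.2‖) := by ring
  calc ∫ x, w x * (∫ ξ, cexp (I * ⟪ξ, x⟫) * ρ ξ ∂ν) * ψ x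
      = ∫ x, ∫ ξ, w x * (cexp (I * ⟪ξ, x⟫) * ρ ξ) * ψ x ∂ν := by
        congr with x
        rw [← integral_const_mul, ← integral_mul_const]
    _ = ∫ ξ, (∫ x, w x * (cexp (I * ⟪ξ, x⟫) * ρ ξ) * ψ x) ∂ν := integral_integral_swap hint
    _ = ∫ ξ, (∫ x, w x * (cexp (I * ⟪ξ, x⟫) * ψ x)) * ρ ξ ∂ν := by
        congr with ξ
        rw [← integral_mul_const]
        congr with x
        ring

theorem fresnel_integral_eq_integral_mul_fourier {ℏ : ℝ} (hℏ : 0 < ℏ) {g : V → ℂ}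
    (hg : Integrable g) (hFg : Integrable (𝓕 g)) :
    (((2 * π : ℝ) : ℂ) * I * ℏ) ^ (-(finrank ℝ V : ℂ) / 2) *
        ∫ k, cexp (I * ((‖k‖ ^ 2 : ℝ) : ℂ) / (2 * ℏ)) * g k
      = ∫ x, cexp (-(2 * π ^ 2 * ℏ * I) * ‖x‖ ^ 2) * 𝓕 g x := by
  have hπ : (π : ℂ) ≠ 0 := ofReal_ne_zero.2 pi_ne_zero
  have hℏ' : (ℏ : ℂ) ≠ 0 := ofReal_ne_zero.2 hℏ.ne'
  set b : ℂ := 2 * π ^ 2 * ℏ * I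
  have hb₀ : b ≠ 0 := by simp [b, hπ, hℏ']
  have hre : b.re = 0 := by simp [b, ← ofReal_pow]
  have hconst : (((2 * π : ℝ) : ℂ) * I * ℏ) ^ (-(finrank ℝ V : ℂ) / 2)
      = (π / b) ^ (finrank ℝ V / 2 : ℂ) := by
    have harg : (((2 * π : ℝ) : ℂ) * I * ℏ).arg ≠ π := by
      rw [Ne, arg_eq_pi_iff]
      simp
    have hinv : (π : ℂ) / b = (((2 * π : ℝ) : ℂ) * I * ℏ)⁻¹ := by
      push_cast
      field_simp
      ring
    rw [hinv, inv_cpow _ _ harg, ← cpow_neg, neg_div]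
  have hphase (k : V) : I * ((‖k‖ ^ 2 : ℝ) : ℂ) / (2 * ℏ) = -π ^ 2 * ‖k‖ ^ 2 / b := by
    rw [div_eq_div_iff (by simp [hℏ']) hb₀]
    push_cast
    linear_combination (2 * π ^ 2 * ℏ * ‖k‖ ^ 2 : ℂ) * I_sq
  simp_rw [hconst, hphase]
  exact (integral_cexp_neg_mul_sq_norm_mul_fourier_of_re_nonneg hre.ge hb₀ hg hFg).symm

theorem fresnel_integral_modulate_dilate {ℏ : ℝ} (hℏ : 0 < ℏ) {ε : ℝ} (hε : ε ≠ 0) (ξ : V)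
    (φ : 𝓢(V, ℂ)) :
    (((2 * π : ℝ) : ℂ) * I * ℏ) ^ (-(finrank ℝ V : ℂ) / 2) *
        ∫ x, cexp (I * ((‖x‖ ^ 2 : ℝ) : ℂ) / (2 * ℏ)) * (cexp (I * ⟪ξ, x⟫) * φ (ε • x))
      = ∫ u, cexp (-(2 * π ^ 2 * ℏ * I) * ‖(2 * π)⁻¹ • ξ + ε • u‖ ^ 2) * 𝓕 (φ : V → ℂ) u := by
  set a : V := (2 * π)⁻¹ • ξ
  have hmod (x : V) : cexp (I * ⟪ξ, x⟫) * φ (ε • x) = 𝐞 ⟪x, a⟫ • φ (ε • x) := by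
    rw [Circle.smul_def, fourierChar_apply, smul_eq_mul, real_inner_smul_right, real_inner_comm]
    congr 2
    push_cast
    field_simp [pi_ne_zero]
  simp_rw [hmod]
  rw [fresnel_integral_eq_integral_mul_fourier hℏ (integrable_modulate_dilate hε a φ.integrable)
    (integrable_fourier_modulate_dilate hε a (𝓕 φ).integrable)]
  simpa only [smul_eq_mul] using integral_smul_fourier_modulate_dilate hε a φ _

theorem tendsto_integral_fresnel_phase_mul_fourier (ℏ : ℝ) (ξ : V) (φ : 𝓢(V, ℂ)) :
    Tendsto (fun ε : ℝ ↦
        ∫ u, cexp (-(2 * π ^ 2 * ℏ * I) * ‖(2 * π)⁻¹ • ξ + ε • u‖ ^ 2) * 𝓕 (φ : V → ℂ) u)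
      (𝓝 0) (𝓝 (cexp (-I * ℏ * ((‖ξ‖ ^ 2 : ℝ) : ℂ) / 2) * φ 0)) := by
  have h := tendsto_integral_gaussian_add_smul_mul (b := 2 * π ^ 2 * ℏ * I)
    (by simp [← ofReal_pow]) (𝓕 φ).integrable ((2 * π)⁻¹ • ξ)
  rw [SchwartzMap.fourier_coe, integral_fourier_eq_apply_zero] at h
  convert h using 4
  rw [norm_smul, Real.norm_of_nonneg (by positivity)]
  push_cast
  field_simp [pi_ne_zero]

end InnerProductSpace

/-- The complex measure `μ` is represented as `ρ dν`, with `ν` a finite positive Borel measure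
and `ρ ∈ L¹(ν)`. -/
theorem fresnel_parseval_measure (ℏ : ℝ) (hℏ : 0 < ℏ) (d : ℕ)
    (ν : Measure (Ed d)) (hν : IsFiniteMeasure ν) (ρ : Ed d → ℂ)
    (hρ : Integrable ρ ν) (f : Ed d → ℂ)
    (hf : f = fun x => ∫ ξ : Ed d, Complex.exp (Complex.I * ((inner ℝ ξ x : ℝ) : ℂ)) * ρ ξ ∂ν) :
    ∀ φ : SchwartzMap (Ed d) ℂ, φ 0 = 1 →
      Tendsto
        (fun ε : ℝ =>
          (((2 * Real.pi : ℝ) : ℂ) * Complex.I * (ℏ : ℂ)) ^ (-(d : ℂ) / 2) *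
            ∫ x : Ed d,
              Complex.exp (Complex.I * ((‖x‖ ^ 2 : ℝ) : ℂ) / (2 * (ℏ : ℂ))) * f x * φ (ε • x))
        (𝓝[>] (0 : ℝ))
        (𝓝 (∫ x : Ed d,
          Complex.exp (-Complex.I * (ℏ : ℂ) * ((‖x‖ ^ 2 : ℝ) : ℂ) / 2) * ρ x ∂ν)) := by
  intro φ hφ
  subst hf
  rw [show (d : ℂ) = finrank ℝ (Ed d) by simp]
  have hb : 0 ≤ (2 * π ^ 2 * ℏ * I : ℂ).re := by simp [← ofReal_pow]
  have hFφ : Integrable (𝓕 (φ : Ed d → ℂ)) := (𝓕 φ).integrable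
  have hlim : Tendsto (fun ε : ℝ ↦ ∫ ξ, (∫ u, cexp (-(2 * π ^ 2 * ℏ * I) *
        ‖(2 * π)⁻¹ • ξ + ε • u‖ ^ 2) * 𝓕 (φ : Ed d → ℂ) u) * ρ ξ ∂ν) (𝓝[>] 0)
      (𝓝 (∫ ξ, cexp (-I * ℏ * ((‖ξ‖ ^ 2 : ℝ) : ℂ) / 2) * ρ ξ ∂ν)) :=
    tendsto_integral_mul_of_norm_le hρ
      (Eventually.of_forall fun ε ↦ ((continuous_integral_gaussian_add_smul_mul hb hFφ ε).comp
        (continuous_const_smul _)).aestronglyMeasurable)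
      (Eventually.of_forall fun ε ξ ↦ norm_integral_gaussian_add_smul_mul_le hb hFφ ε _)
      fun ξ ↦ by
        simpa [hφ] using
          (tendsto_integral_fresnel_phase_mul_fourier ℏ ξ φ).mono_left nhdsWithin_le_nhds
  refine hlim.congr' (eventually_nhdsWithin_of_forall fun ε (hε : 0 < ε) ↦ ?_)
  dsimp only
  rw [integral_mul_integral_cexp_inner_mul hρ (by fun_prop)
    (fun x ↦ (norm_cexp_I_mul_ofReal_div_two_mul _ ℏ).le) (φ.integrable.comp_smul hε.ne'),
    ← integral_const_mul]
  congr 1 with ξ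
  rw [← mul_assoc, fresnel_integral_modulate_dilate hℏ hε.ne']
end
end

section
/- The function f(x) = cos|x| on ℝ³ is not the Fourier transform of a finite complex Borel measure on ℝ³: there is no finite complex Borel measure μ on ℝ³ with cos|ξ| = ∫_{ℝ³} e^{-i ξ·x} dμ(x) for all ξ ∈ ℝ³. -/
/-!
Average the identity over the circles `ξ = r (cos θ • u + sin θ • v)` with `u, v` orthonormal,
on which `|ξ| = r`. The left side stays `cos r`, while each plane wave `e^{-i⟨ξ, x⟩}` averages
to `J₀(r s(x))` with `s(x) = |(⟨u, x⟩, ⟨v, x⟩)|` and `J₀` the Bessel function.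
After substituting `t = cos θ`, `J₀(c) → 0` as `c → ∞` by the Riemann–Lebesgue lemma, so by
dominated convergence the right side tends to the `ρ ν`-mass of `{s = 0}` as `r → ∞`.
But `cos r` has no limit.
-/

open MeasureTheory Complex Filter
open scoped RealInnerProductSpace ENNReal Topology

noncomputable section

open Set Real


def besselJ0 (c : ℝ) : ℂ := (2 * π)⁻¹ • ∫ θ in 0..2 * π, cexp (↑(c * Real.cos θ) * I)

lemma besselJ0_zero : besselJ0 0 = 1 := by
  simp only [besselJ0, zero_mul, ofReal_zero, Complex.exp_zero, intervalIntegral.integral_const,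
    sub_zero, smul_smul]
  rw [inv_mul_cancel₀ (by positivity), one_smul]

lemma norm_besselJ0_le (c : ℝ) : ‖besselJ0 c‖ ≤ 1 := by
  have hint : ‖∫ θ in 0..2 * π, cexp (↑(c * Real.cos θ) * I)‖ ≤ 1 * |2 * π - 0| :=
    intervalIntegral.norm_integral_le_of_norm_le_const fun θ _ => by
      rw [norm_exp_ofReal_mul_I]
  rw [besselJ0, norm_smul, norm_inv, Real.norm_of_nonneg (by positivity)]
  rw [one_mul, sub_zero, abs_of_pos (by positivity)] at hint
  calc (2 * π)⁻¹ * ‖_‖ ≤ (2 * π)⁻¹ * (2 * π) := by gcongr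
    _ = 1 := inv_mul_cancel₀ (by positivity)

lemma continuous_besselJ0 : Continuous besselJ0 := by
  unfold besselJ0
  fun_prop

lemma besselJ0_eq_average_cos_sub (c β : ℝ) :
    (2 * π)⁻¹ • ∫ θ in 0..2 * π, cexp (↑(c * Real.cos (θ - β)) * I) = besselJ0 c := by
  have hper : Function.Periodic (fun θ : ℝ => cexp (↑(c * Real.cos θ) * I)) (2 * π) :=
    fun θ => by simp only [Real.cos_add_two_pi]
  rw [intervalIntegral.integral_comp_sub_right (fun θ => cexp (↑(c * Real.cos θ) * I)), zero_sub,
    show 2 * π - β = -β + 2 * π by ring, hper.intervalIntegral_add_eq (-β) 0, zero_add, besselJ0]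

lemma integral_comp_cos_two_pi {E : Type*} [NormedAddCommGroup E] [NormedSpace ℝ E]
    {f : ℝ → E} (hf : Continuous f) :
    ∫ θ in 0..2 * π, f (Real.cos θ) = (2 : ℝ) • ∫ θ in 0..π, f (Real.cos θ) := by
  have hfc : Continuous fun θ => f (Real.cos θ) := hf.comp continuous_cos
  rw [← intervalIntegral.integral_add_adjacent_intervals (b := π) (hfc.intervalIntegrable _ _)
    (hfc.intervalIntegrable _ _), two_smul]
  congr 1
  have := intervalIntegral.integral_comp_sub_left (fun θ => f (Real.cos θ)) (a := 0) (b := π)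
    (2 * π)
  simp only [Real.cos_two_pi_sub] at this
  rw [this]; ring_nf

lemma integral_Ioo_comp_cos {E : Type*} [NormedAddCommGroup E] [NormedSpace ℝ E]
    (f : ℝ → E) :
    ∫ θ in Ioo 0 π, f (Real.cos θ) = ∫ u in Ioo (-1) 1, (√(1 - u ^ 2))⁻¹ • f u := by
  have himage : Real.cos '' Ioo 0 π = Ioo (-1) 1 := cosPartialHomeomorph.image_source_eq_target
  rw [← himage, integral_image_eq_integral_abs_deriv_smul (f' := fun θ => -Real.sin θ)
    measurableSet_Ioo (fun θ _ => (Real.hasDerivAt_cos θ).hasDerivWithinAt)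
    (injOn_cos.mono Ioo_subset_Icc_self)]
  refine setIntegral_congr_fun measurableSet_Ioo fun θ hθ => ?_
  have hsin : 0 < Real.sin θ := sin_pos_of_pos_of_lt_pi hθ.1 hθ.2
  rw [← Real.sin_sq, sqrt_sq hsin.le, abs_neg, abs_of_pos hsin, smul_smul, mul_inv_cancel₀ hsin.ne',
    one_smul]

lemma besselJ0_eq_integral_arcsine (c : ℝ) :
    besselJ0 c = π⁻¹ • ∫ u in Ioo (-1) 1, (√(1 - u ^ 2))⁻¹ • cexp (↑(c * u) * I) := by
  have hcont : Continuous fun u : ℝ => cexp (↑(c * u) * I) := by fun_prop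
  rw [besselJ0, integral_comp_cos_two_pi hcont, intervalIntegral.integral_of_le pi_pos.le,
    integral_Ioc_eq_integral_Ioo, integral_Ioo_comp_cos fun u => cexp (↑(c * u) * I), smul_smul]
  congr 1
  field_simp

lemma tendsto_besselJ0_atTop : Tendsto besselJ0 atTop (𝓝 0) := by
  set h : ℝ → ℂ := (Ioo (-1) 1).indicator fun u => ((√(1 - u ^ 2))⁻¹ : ℝ)
  have hfourier (c : ℝ) : ∫ u in Ioo (-1) 1, (√(1 - u ^ 2))⁻¹ • cexp (↑(c * u) * I) =
      ∫ v, Real.fourierChar (-(v * (-c / (2 * π)))) • h v := by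
    rw [← integral_indicator measurableSet_Ioo]
    congr 1 with v
    by_cases hv : v ∈ Ioo (-1) 1
    · simp only [h, indicator_of_mem hv, Circle.smul_def, Real.fourierChar_apply, real_smul]
      rw [mul_comm]
      congr 2
      push_cast
      field_simp
    · simp [h, indicator_of_notMem hv]
  have hfreq : Tendsto (fun c : ℝ => -c / (2 * π)) atTop (cocompact ℝ) :=
    ((tendsto_neg_atTop_atBot.atBot_div_const (by positivity))).mono_right atBot_le_cocompact
  have hRL := (Real.tendsto_integral_exp_smul_cocompact h).comp hfreq
  have hJ : besselJ0 = fun c : ℝ => π⁻¹ • ∫ v, Real.fourierChar (-(v * (-c / (2 * π)))) • h v :=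
    funext fun c => by rw [besselJ0_eq_integral_arcsine, hfourier]
  simpa [hJ] using hRL.const_smul π⁻¹

lemma exists_cos_sub_eq (a b : ℝ) :
    ∃ α, ∀ θ, Real.cos θ * a + Real.sin θ * b = √(a ^ 2 + b ^ 2) * Real.cos (θ - α) := by
  set z : ℂ := ⟨a, b⟩
  have hz : ‖z‖ = √(a ^ 2 + b ^ 2) := by rw [Complex.norm_def, normSq_mk]; ring_nf
  refine ⟨arg z, fun θ => ?_⟩
  rw [Real.cos_sub, ← hz]
  linear_combination (-Real.cos θ) * norm_mul_cos_arg z - Real.sin θ * norm_mul_sin_arg z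

lemma norm_exp_neg_I_mul_ofReal (t : ℝ) : ‖cexp (-I * t)‖ = 1 := by
  rw [neg_mul, ← mul_neg, ← ofReal_neg, norm_exp_I_mul_ofReal]

section PlaneCircle

variable {E : Type*} [NormedAddCommGroup E] [InnerProductSpace ℝ E]

lemma norm_smul_cos_smul_add_sin_smul {u v : E} (hu : ‖u‖ = 1) (hv : ‖v‖ = 1) (huv : ⟪u, v⟫ = 0)
    (r θ : ℝ) : ‖r • (Real.cos θ • u + Real.sin θ • v)‖ = |r| := by
  have hsq : ‖Real.cos θ • u + Real.sin θ • v‖ ^ 2 = 1 := by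
    rw [norm_add_sq_real, norm_smul, norm_smul, real_inner_smul_left, real_inner_smul_right, huv,
      hu, hv]
    simp only [Real.norm_eq_abs, mul_one, mul_zero, sq_abs, add_zero]
    exact cos_sq_add_sin_sq θ
  rw [norm_smul, Real.norm_eq_abs, (pow_eq_one_iff_of_nonneg (norm_nonneg _) two_ne_zero).1 hsq,
    mul_one]

lemma average_exp_inner_circle_eq_besselJ0 (u v x : E) (r : ℝ) :
    (2 * π)⁻¹ • ∫ θ in 0..2 * π, cexp (-I * ⟪r • (Real.cos θ • u + Real.sin θ • v), x⟫)
      = besselJ0 (r * √(⟪u, x⟫ ^ 2 + ⟪v, x⟫ ^ 2)) := by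
  obtain ⟨α, hα⟩ := exists_cos_sub_eq ⟪u, x⟫ ⟪v, x⟫
  rw [← besselJ0_eq_average_cos_sub _ (α + π)]
  congr 1
  refine intervalIntegral.integral_congr fun θ _ => ?_
  have hphase : ⟪r • (Real.cos θ • u + Real.sin θ • v), x⟫
      = -(r * √(⟪u, x⟫ ^ 2 + ⟪v, x⟫ ^ 2) * Real.cos (θ - (α + π))) := by
    rw [real_inner_smul_left, inner_add_left, real_inner_smul_left, real_inner_smul_left, hα,
      ← sub_sub, Real.cos_sub_pi]
    ring
  rw [hphase]
  push_cast
  ring_nf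

end PlaneCircle

lemma MeasureTheory.Integrable.exists_sigmaFinite_setIntegral_mul_eq {α : Type*}
    [MeasurableSpace α] {ν : Measure α} {ρ : α → ℂ} (hρ : Integrable ρ ν) :
    ∃ t, SigmaFinite (ν.restrict t) ∧ ∀ f : α → ℂ, ∫ x in t, f x * ρ x ∂ν = ∫ x, f x * ρ x ∂ν := by
  obtain ⟨t, ht, hρt, hσ⟩ := hρ.aefinStronglyMeasurable.exists_set_sigmaFinite
  refine ⟨t, hσ, fun f => setIntegral_eq_integral_of_ae_compl_eq_zero ?_⟩
  filter_upwards [(ae_restrict_iff' ht.compl).1 hρt] with x hx hxt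
  rw [hx hxt, Pi.zero_apply, mul_zero]

section FourierMeasure

variable {E : Type*} [NormedAddCommGroup E] [InnerProductSpace ℝ E] [MeasurableSpace E]
  [OpensMeasurableSpace E] {ν : Measure E} [SFinite ν] {ρ : E → ℂ}

lemma integral_integral_exp_inner_mul_swap (hρ : Integrable ρ ν) {τ : Measure ℝ}
    [IsFiniteMeasure τ] {γ : ℝ → E} (hγ : Continuous γ) :
    ∫ θ, (∫ x, cexp (-I * ⟪γ θ, x⟫) * ρ x ∂ν) ∂τ
      = ∫ x, (∫ θ, cexp (-I * ⟪γ θ, x⟫) ∂τ) * ρ x ∂ν := by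
  have hwave : Continuous fun p : ℝ × E => cexp (-I * ⟪γ p.1, p.2⟫) := by fun_prop
  have hint : Integrable (fun p : ℝ × E => cexp (-I * ⟪γ p.1, p.2⟫) * ρ p.2) (τ.prod ν) := by
    refine Integrable.bdd_mul (c := 1) ?_ hwave.aestronglyMeasurable
      (Eventually.of_forall fun p => (norm_exp_neg_I_mul_ofReal _).le)
    simpa using (integrable_const (1 : ℂ)).mul_prod hρ
  simp_rw [← integral_mul_const]
  exact integral_integral_swap hint

lemma ofReal_cos_eq_integral_besselJ0_mul {u v : E} (hu : ‖u‖ = 1) (hv : ‖v‖ = 1)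
    (huv : ⟪u, v⟫ = 0) (hρ : Integrable ρ ν)
    (hFT : ∀ ξ : E, (Real.cos ‖ξ‖ : ℂ) = ∫ x, cexp (-I * ⟪ξ, x⟫) * ρ x ∂ν) (r : ℝ) :
    (Real.cos r : ℂ) = ∫ x, besselJ0 (r * √(⟪u, x⟫ ^ 2 + ⟪v, x⟫ ^ 2)) * ρ x ∂ν := by
  set γ : ℝ → E := fun θ => r • (Real.cos θ • u + Real.sin θ • v)
  have hγ : Continuous γ := by fun_prop
  calc (Real.cos r : ℂ)
      = (2 * π)⁻¹ • ∫ θ in 0..2 * π, (Real.cos ‖γ θ‖ : ℂ) := by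
        simp only [γ, norm_smul_cos_smul_add_sin_smul hu hv huv, Real.cos_abs,
          intervalIntegral.integral_const, sub_zero, smul_smul]
        rw [inv_mul_cancel₀ (by positivity), one_smul]
    _ = (2 * π)⁻¹ • ∫ θ in Ioc 0 (2 * π), ∫ x, cexp (-I * ⟪γ θ, x⟫) * ρ x ∂ν := by
        rw [intervalIntegral.integral_of_le (by positivity)]
        simp_rw [hFT]
    _ = ∫ x, ((2 * π)⁻¹ • ∫ θ in 0..2 * π, cexp (-I * ⟪γ θ, x⟫)) * ρ x ∂ν := by
        rw [integral_integral_exp_inner_mul_swap hρ hγ, ← integral_smul]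
        simp_rw [smul_mul_assoc, intervalIntegral.integral_of_le (by positivity : 0 ≤ 2 * π)]
    _ = ∫ x, besselJ0 (r * √(⟪u, x⟫ ^ 2 + ⟪v, x⟫ ^ 2)) * ρ x ∂ν := by
        simp_rw [γ, average_exp_inner_circle_eq_besselJ0]

end FourierMeasure

lemma tendsto_integral_besselJ0_mul {α : Type*} [MeasurableSpace α] {ν : Measure α}
    {ρ : α → ℂ} (hρ : Integrable ρ ν) {s : α → ℝ} (hs : Measurable s) (hs0 : ∀ x, 0 ≤ s x) :
    Tendsto (fun r => ∫ x, besselJ0 (r * s x) * ρ x ∂ν) atTop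
      (𝓝 (∫ x, {x | s x = 0}.indicator ρ x ∂ν)) := by
  refine tendsto_integral_filter_of_dominated_convergence (fun x => ‖ρ x‖)
    (Eventually.of_forall fun r => ?_) (Eventually.of_forall fun r => ?_) hρ.norm ?_
  · exact ((continuous_besselJ0.measurable.comp (measurable_const.mul hs)).aestronglyMeasurable).mul
      hρ.aestronglyMeasurable
  · refine Eventually.of_forall fun x => ?_
    rw [norm_mul]
    exact mul_le_of_le_one_left (norm_nonneg _) (norm_besselJ0_le _)
  · refine Eventually.of_forall fun x => ?_
    by_cases hx : s x = 0
    · simp [hx, besselJ0_zero]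
    · have hscale : Tendsto (fun r => r * s x) atTop atTop :=
        tendsto_id.atTop_mul_const (lt_of_le_of_ne (hs0 x) (Ne.symm hx))
      simpa [hx] using (tendsto_besselJ0_atTop.comp hscale).mul_const (ρ x)

lemma not_tendsto_ofReal_cos_atTop (L : ℂ) :
    ¬ Tendsto (fun r : ℝ => (Real.cos r : ℂ)) atTop (𝓝 L) := by
  intro h
  have hmul : Tendsto (fun n : ℕ => (n : ℝ) * (2 * π)) atTop atTop :=
    tendsto_natCast_atTop_atTop.atTop_mul_const (by positivity)
  have h1 : Tendsto (fun n : ℕ => (Real.cos (n * (2 * π)) : ℂ)) atTop (𝓝 L) := h.comp hmul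
  have h2 : Tendsto (fun n : ℕ => (Real.cos (n * (2 * π) + π) : ℂ)) atTop (𝓝 L) :=
    h.comp (tendsto_atTop_add_const_right _ π hmul)
  simp only [Real.cos_nat_mul_two_pi, Real.cos_nat_mul_two_pi_add_pi, ofReal_one, ofReal_neg]
    at h1 h2
  have := (tendsto_nhds_unique tendsto_const_nhds h1).trans
    (tendsto_nhds_unique tendsto_const_nhds h2).symm
  norm_num at this

theorem not_exists_fourier_eq_cos_norm {E : Type*} [NormedAddCommGroup E]
    [InnerProductSpace ℝ E] [MeasurableSpace E] [OpensMeasurableSpace E] {u v : E}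
    (hu : ‖u‖ = 1) (hv : ‖v‖ = 1) (huv : ⟪u, v⟫ = 0) :
    ¬ ∃ (ν : Measure E) (ρ : E → ℂ), Integrable ρ ν ∧
      ∀ ξ : E, (Real.cos ‖ξ‖ : ℂ) = ∫ x, cexp (-I * ⟪ξ, x⟫) * ρ x ∂ν := by
  rintro ⟨ν, ρ, hρ, hFT⟩
  -- `ν` need not be s-finite, so Fubini is run on a σ-finite piece carrying `ρ`.
  obtain ⟨t, hσ, hνt⟩ := hρ.exists_sigmaFinite_setIntegral_mul_eq
  have hcos (r : ℝ) := (ofReal_cos_eq_integral_besselJ0_mul hu hv huv hρ.integrableOn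
    (fun ξ => (hFT ξ).trans (hνt _).symm) r).trans (hνt _)
  have hlim := tendsto_integral_besselJ0_mul hρ
    (s := fun x => √(⟪u, x⟫ ^ 2 + ⟪v, x⟫ ^ 2)) (by fun_prop) fun x => sqrt_nonneg _
  rw [← funext hcos] at hlim
  exact not_tendsto_ofReal_cos_atTop _ hlim

/-- `cos |ξ|` on ℝ³ is not the Fourier transform of a finite complex
Borel measure (any such measure being of the form `ρ dν` with `ρ` integrable). -/
theorem cos_norm_not_fourier_of_measure :
    ¬ ∃ (ν : Measure (Ed 3)) (ρ : Ed 3 → ℂ), Integrable ρ ν ∧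
      ∀ ξ : Ed 3, ((Real.cos ‖ξ‖ : ℝ) : ℂ) =
        ∫ x : Ed 3, Complex.exp (-Complex.I * ((inner ℝ ξ x : ℝ) : ℂ)) * ρ x ∂ν :=
  not_exists_fourier_eq_cos_norm (u := EuclideanSpace.single 0 1) (v := EuclideanSpace.single 1 1)
    (by simp) (by simp) (by simp [EuclideanSpace.inner_single_left])
end
end

section
/- Lower bound for the Fresnel functional norm via Gaussians: for f_ε(x) = e^{-(ε+i)|x|²/(2ℏ)} on ℝⁿ with ε > 0, the Fresnel integral of e^{i|x|²/(2ℏ)} f_ε equals (iε)^{-n/2}, and with Gaussian window g_n as above, ‖f_ε‖_{M^{∞,1}_{(g_n)}} = ∏_{j=1}^{n} ((q_j+ε)² + 1)^{1/4} ( (1 + ε(q_j+ε)) / (ε(q_j² + 2q_jε + 1 + ε²)) )^{1/2}. -/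
open MeasureTheory Complex Filter
open scoped RealInnerProductSpace ENNReal Topology

noncomputable section

/-!
Multiplying by the chirp `e^{i|x|²/2ℏ}` turns `f_ε` into the real Gaussian `e^{-ε|x|²/2ℏ}`, so
dominated convergence removes the cutoff `φ(ε'x)` and the Fresnel integral is
`(2πiℏ)^{-n/2} (2πℏ/ε)^{n/2} = (iε)^{-n/2}`.

For the norm everything factors over coordinates: the STFT of `f_ε` against the diagonal Gaussian
window is a product of one-dimensional complex Gaussian integrals. Completing the square, the
modulus of the `j`-th factor is `e^{-εξ_j²/(2ℏ(1+ε(q_j+ε)))}` (up to a constant) times a Gaussian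
in `x_j` equal to `1` at `x_j = -ξ_j/(1+ε(q_j+ε))`. So the supremum over `x` is an explicit
Gaussian in `ξ`, whose integral is the stated product.
-/

open scoped BoundedContinuousFunction SchwartzMap ComplexConjugate

/-- The test function `f_ε` of the statement. -/
def dampedChirp (ℏ ε : ℝ) {n : ℕ} (x : Ed n) : ℂ :=
  cexp (-((ε : ℂ) + I) * ((‖x‖ ^ 2 : ℝ) : ℂ) / (2 * (ℏ : ℂ)))

theorem Complex.ofReal_mul_cpow_s10 {a : ℝ} (ha : 0 < a) {z : ℂ} (hz : z ≠ 0) (w : ℂ) :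
    ((a : ℂ) * z) ^ w = (a : ℂ) ^ w * z ^ w := by
  have ha' : (a : ℂ) ≠ 0 := ofReal_ne_zero.2 ha.ne'
  rw [cpow_def_of_ne_zero (mul_ne_zero ha' hz), cpow_def_of_ne_zero ha', cpow_def_of_ne_zero hz,
    log_ofReal_mul ha hz, ← exp_add, ofReal_log ha.le, add_mul]

theorem Complex.ofReal_mul_I_cpow_neg_mul_cpow_div {a r : ℝ} (ha : 0 < a) (hr : 0 < r) (w : ℂ) :
    ((a : ℂ) * I) ^ (-w) * ((a / r : ℝ) : ℂ) ^ w = (I * r) ^ (-w) := by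
  have har : 0 < a / r := div_pos ha hr
  have hr' : (r : ℂ) ≠ 0 := ofReal_ne_zero.2 hr.ne'
  have hsplit : (a : ℂ) * I = ((a / r : ℝ) : ℂ) * (I * r) := by
    push_cast
    field_simp
  rw [hsplit, ofReal_mul_cpow_s10 har (mul_ne_zero I_ne_zero hr'), mul_right_comm,
    ← cpow_add _ _ (ofReal_ne_zero.2 har.ne'), neg_add_cancel, cpow_zero, one_mul]

theorem tendsto_integral_mul_comp_smul {V : Type*} [NormedAddCommGroup V] [NormedSpace ℝ V]
    [MeasurableSpace V] [OpensMeasurableSpace V] {μ : Measure V} {g : V → ℂ}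
    (hg : Integrable g μ) (φ : V →ᵇ ℂ) :
    Tendsto (fun s : ℝ => ∫ x, g x * φ (s • x) ∂μ) (𝓝 0) (𝓝 ((∫ x, g x ∂μ) * φ 0)) := by
  rw [← integral_mul_const]
  refine tendsto_integral_filter_of_dominated_convergence (fun x => ‖g x‖ * ‖φ‖) ?_ ?_
    (hg.norm.mul_const _) ?_
  · exact .of_forall fun s =>
      hg.aestronglyMeasurable.mul (φ.continuous.comp (continuous_const_smul s)).aestronglyMeasurable
  · exact .of_forall fun s => .of_forall fun x => by
      rw [norm_mul]; gcongr; exact φ.norm_coe_le_norm _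
  · refine .of_forall fun x => (tendsto_const_nhds.mul ?_)
    have hcont : Continuous fun s : ℝ => φ (s • x) := by fun_prop
    simpa using hcont.tendsto 0

theorem tendsto_fresnel_integral_dampedChirp {ℏ ε : ℝ} (hℏ : 0 < ℏ) (hε : 0 < ε) {n : ℕ}
    (φ : 𝓢(Ed n, ℂ)) (hφ : φ 0 = 1) :
    Tendsto
      (fun ε' : ℝ =>
        (((2 * Real.pi : ℝ) : ℂ) * I * (ℏ : ℂ)) ^ (-(n : ℂ) / 2) *
          ∫ x : Ed n, cexp (I * ((‖x‖ ^ 2 : ℝ) : ℂ) / (2 * (ℏ : ℂ))) *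
            dampedChirp ℏ ε x * φ (ε' • x))
      (𝓝[>] 0) (𝓝 ((I * (ε : ℂ)) ^ (-(n : ℂ) / 2))) := by
  set b : ℂ := ε / (2 * ℏ) with hb_def
  have hb : 0 < b.re := by
    rw [hb_def, ← ofReal_ofNat, ← ofReal_mul, ← ofReal_div, ofReal_re]
    positivity
  have hchirp (x : Ed n) : cexp (I * ((‖x‖ ^ 2 : ℝ) : ℂ) / (2 * (ℏ : ℂ))) * dampedChirp ℏ ε x =
      cexp (-b * ‖x‖ ^ 2) := by
    rw [dampedChirp, ← Complex.exp_add, hb_def]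
    congr 1
    push_cast
    field_simp
    ring
  have hconst : (((2 * Real.pi : ℝ) : ℂ) * I * (ℏ : ℂ)) ^ (-(n : ℂ) / 2) *
      (Real.pi / b) ^ ((n : ℂ) / 2) = (I * (ε : ℂ)) ^ (-(n : ℂ) / 2) := by
    have h1 : ((2 * Real.pi : ℝ) : ℂ) * I * (ℏ : ℂ) = ((2 * Real.pi * ℏ : ℝ) : ℂ) * I := by
      push_cast
      ring
    have h2 : (Real.pi : ℂ) / b = ((2 * Real.pi * ℏ / ε : ℝ) : ℂ) := by
      rw [hb_def]
      push_cast
      field_simp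
    rw [h1, h2, neg_div]
    exact ofReal_mul_I_cpow_neg_mul_cpow_div (by positivity) hε _
  have hgauss : Integrable fun x : Ed n => cexp (-b * ‖x‖ ^ 2) := by
    simpa using GaussianFourier.integrable_cexp_neg_mul_sq_norm_add hb 0 (0 : Ed n)
  have hlim := ((tendsto_integral_mul_comp_smul hgauss φ.toBoundedContinuousFunction).mono_left
    (nhdsWithin_le_nhds (s := Set.Ioi 0))).const_mul
      ((((2 * Real.pi : ℝ) : ℂ) * I * (ℏ : ℂ)) ^ (-(n : ℂ) / 2))
  rw [GaussianFourier.integral_cexp_neg_mul_sq_norm hb, finrank_euclideanSpace_fin,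
    SchwartzMap.toBoundedContinuousFunction_apply, hφ, mul_one, hconst] at hlim
  simp only [hchirp]
  simpa only [SchwartzMap.toBoundedContinuousFunction_apply] using hlim

section EuclideanProduct

variable {ι 𝕜 : Type*} [Fintype ι] [RCLike 𝕜]

theorem integral_euclideanSpace_prod_eq_prod (f : ι → ℝ → 𝕜) :
    ∫ x : EuclideanSpace ℝ ι, ∏ i, f i (x i) = ∏ i, ∫ t, f i t := by
  rw [← (PiLp.volume_preserving_toLp ι).integral_comp
    (MeasurableEquiv.toLp 2 _).measurableEmbedding]
  exact integral_fintype_prod_volume_eq_prod f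

theorem integrable_euclideanSpace_prod {f : ι → ℝ → 𝕜} (hf : ∀ i, Integrable (f i)) :
    Integrable fun x : EuclideanSpace ℝ ι => ∏ i, f i (x i) := by
  rw [← (PiLp.volume_preserving_toLp ι).integrable_comp_emb
    (MeasurableEquiv.toLp 2 _).measurableEmbedding]
  exact Integrable.fintype_prod hf

end EuclideanProduct

theorem conj_gwin {ℏ : ℝ} (hℏ : 0 ≤ ℏ) {n : ℕ} (q : Fin n → ℝ) (z : Ed n) :
    conj (gwin ℏ q z) = gwin ℏ q z := by
  have hC : (((2 * Real.pi * ℏ : ℝ) : ℂ)) ^ (-(n : ℂ) / 2) =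
      (((2 * Real.pi * ℏ) ^ (-(n : ℝ) / 2) : ℝ) : ℂ) := by
    rw [ofReal_cpow (by positivity)]
    push_cast
    rfl
  rw [gwin, map_mul, hC, conj_ofReal, ← exp_conj]
  simp [map_div₀, map_ofNat]

/-- The exponent of the `j`-th factor of `e^{-iξ·y/ℏ} f_ε(y) g(y - x)`, where `q = q_j`, `s = x_j`,
`t = ξ_j` and `u = y_j`. -/
def stftPhase (ℏ ε q s t u : ℝ) : ℂ :=
  -(I / ℏ) * t * u - (ε + I) * u ^ 2 / (2 * ℏ) - q * (u - s) ^ 2 / (2 * ℏ)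

theorem STFT_gwin_dampedChirp_eq_prod {ℏ : ℝ} (hℏ : 0 < ℏ) {n : ℕ} (q : Fin n → ℝ) (ε : ℝ)
    (x ξ : Ed n) :
    STFT ℏ (gwin ℏ q) (dampedChirp ℏ ε) x ξ =
      ∏ j, ((2 * Real.pi * ℏ)⁻¹ * ∫ u : ℝ, cexp (stftPhase ℏ ε (q j) (x j) (ξ j) u)) := by
  set C : ℂ := (((2 * Real.pi * ℏ : ℝ) : ℂ)) ^ (-(n : ℂ) / 2)
  have hphase (y : Ed n) : -(I / ℏ) * ((inner ℝ ξ y : ℝ) : ℂ) +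
      -((ε : ℂ) + I) * ((‖y‖ ^ 2 : ℝ) : ℂ) / (2 * ℏ) +
      -((∑ j, q j * (y - x) j ^ 2 : ℝ) : ℂ) / (2 * ℏ) =
      ∑ j, stftPhase ℏ ε (q j) (x j) (ξ j) (y j) := by
    rw [EuclideanSpace.norm_sq_eq, real_inner_comm, EuclideanSpace.inner_eq_star_dotProduct]
    simp only [Real.norm_eq_abs, sq_abs, dotProduct, PiLp.sub_apply]
    push_cast
    simp only [Finset.mul_sum, Finset.sum_div, ← Finset.sum_neg_distrib, ← Finset.sum_add_distrib]
    refine Finset.sum_congr rfl fun j _ => ?_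
    simp only [stftPhase, star_trivial]
    ring
  have hintegrand (y : Ed n) : cexp (-(I / ℏ) * ((inner ℝ ξ y : ℝ) : ℂ)) *
      dampedChirp ℏ ε y * conj (gwin ℏ q (y - x)) =
      C * ∏ j, cexp (stftPhase ℏ ε (q j) (x j) (ξ j) (y j)) := by
    rw [dampedChirp, conj_gwin hℏ.le, gwin, ← exp_sum, ← hphase, exp_add, exp_add]
    ring
  have hCC : C * C = ∏ _j : Fin n, (((2 * Real.pi * ℏ)⁻¹ : ℝ) : ℂ) := by
    rw [← cpow_add _ _ (ofReal_ne_zero.2 (by positivity)), Finset.prod_const, Finset.card_univ,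
      Fintype.card_fin, ofReal_inv, inv_pow, ← cpow_natCast, ← cpow_neg]
    ring_nf
  rw [STFT]
  simp only [hintegrand]
  rw [integral_const_mul, integral_euclideanSpace_prod_eq_prod
    (fun j u => cexp (stftPhase ℏ ε (q j) (x j) (ξ j) u)), ← mul_assoc, hCC,
    ← Finset.prod_mul_distrib]

theorem norm_integral_cexp_quadratic {b : ℂ} (hb : b.re < 0) (c d : ℂ) :
    ‖∫ x : ℝ, cexp (b * x ^ 2 + c * x + d)‖ =
      √(Real.pi / ‖b‖) * Real.exp (d - c ^ 2 / (4 * b)).re := by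
  rw [integral_cexp_quadratic hb, norm_mul, norm_exp, show (1 / 2 : ℂ) = ((1 / 2 : ℝ) : ℂ) by simp,
    norm_cpow_real, norm_div, norm_neg, norm_real, Real.norm_of_nonneg Real.pi_pos.le,
    Real.sqrt_eq_rpow]

theorem re_sq_div_add_I (p u v : ℝ) :
    (((u : ℂ) - v * I) ^ 2 / (p + I)).re = ((u ^ 2 - v ^ 2) * p - 2 * u * v) / (p ^ 2 + 1) := by
  rw [div_re]
  simp only [pow_two, mul_re, mul_im, sub_re, sub_im, add_re, add_im, ofReal_re, ofReal_im, I_re,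
    I_im, normSq_apply]
  ring

/-- `sup_s ‖(2πℏ)⁻¹ ∫ exp (stftPhase ℏ ε q s t u) du‖`, attained at `s = -t / (1 + ε (q + ε))`. -/
def gaussEnvelope (ℏ ε q t : ℝ) : ℝ :=
  (2 * Real.pi * ℏ)⁻¹ * √(2 * Real.pi * ℏ / √((q + ε) ^ 2 + 1)) *
    Real.exp (-(ε / (2 * ℏ * (1 + ε * (q + ε)))) * t ^ 2)

theorem gaussEnvelope_nonneg {ℏ : ℝ} (hℏ : 0 ≤ ℏ) (ε q t : ℝ) : 0 ≤ gaussEnvelope ℏ ε q t := by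
  unfold gaussEnvelope
  positivity

theorem norm_stftPhase_factor {ℏ ε q : ℝ} (hℏ : 0 < ℏ) (hε : 0 < ε) (hq : 0 ≤ q) (s t : ℝ) :
    ‖(((2 * Real.pi * ℏ)⁻¹ : ℝ) : ℂ) * ∫ u : ℝ, cexp (stftPhase ℏ ε q s t u)‖ =
      gaussEnvelope ℏ ε q t * Real.exp (-(q * ((1 + ε * (q + ε)) * s + t) ^ 2 /
        (2 * ℏ * ((q + ε) ^ 2 + 1) * (1 + ε * (q + ε))))) := by
  set b : ℂ := -(((q + ε : ℝ) : ℂ) + I) / ((2 * ℏ : ℝ) : ℂ)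
  set c : ℂ := (q * s - I * t) / ℏ
  set d : ℂ := -(q * s ^ 2 / (2 * ℏ))
  have hquad (u : ℝ) : stftPhase ℏ ε q s t u = b * u ^ 2 + c * u + d := by
    simp only [stftPhase, b, c, d]
    push_cast
    field_simp
    ring
  have hb : b.re < 0 := by
    rw [div_ofReal_re, neg_re, add_re, ofReal_re, I_re, add_zero, neg_div, neg_lt_zero]
    positivity
  have hnorm_b : ‖b‖ = √((q + ε) ^ 2 + 1) / (2 * ℏ) := by
    rw [norm_div, norm_neg, norm_real, Real.norm_of_nonneg (by positivity)]
    congr 1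
    simpa using norm_add_mul_I (q + ε) 1
  have hcompl : d - c ^ 2 / (4 * b) = (-(q * s ^ 2 : ℝ) +
      (((q * s : ℝ) : ℂ) - t * I) ^ 2 / ((q + ε : ℝ) + I)) / ((2 * ℏ : ℝ) : ℂ) := by
    simp only [b, c, d]
    push_cast
    field_simp
    ring
  simp only [hquad]
  rw [norm_mul, norm_integral_cexp_quadratic hb, hnorm_b, hcompl, div_ofReal_re, add_re, neg_re,
    ofReal_re, re_sq_div_add_I, norm_real, Real.norm_of_nonneg (by positivity), gaussEnvelope,
    mul_assoc (_ * _), ← Real.exp_add, ← mul_assoc]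
  congr 3
  · field_simp
  · field_simp
    ring

theorem iSup_enorm_STFT_gwin_dampedChirp {ℏ ε : ℝ} (hℏ : 0 < ℏ) (hε : 0 < ε) {n : ℕ}
    {q : Fin n → ℝ} (hq : ∀ j, 0 ≤ q j) (ξ : Ed n) :
    ⨆ x : Ed n, (‖STFT ℏ (gwin ℏ q) (dampedChirp ℏ ε) x ξ‖₊ : ℝ≥0∞) =
      ENNReal.ofReal (∏ j, gaussEnvelope ℏ ε (q j) (ξ j)) := by
  set P : Fin n → ℝ := fun j => 1 + ε * (q j + ε)
  have hP (j : Fin n) : 0 < P j := by have := hq j; positivity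
  have hnorm (x : Ed n) : (‖STFT ℏ (gwin ℏ q) (dampedChirp ℏ ε) x ξ‖₊ : ℝ≥0∞) =
      ENNReal.ofReal (∏ j, gaussEnvelope ℏ ε (q j) (ξ j) * Real.exp
        (-(q j * (P j * x j + ξ j) ^ 2 / (2 * ℏ * ((q j + ε) ^ 2 + 1) * P j)))) := by
    rw [← enorm_eq_nnnorm, ← ofReal_norm, STFT_gwin_dampedChirp_eq_prod hℏ, norm_prod]
    simp only [norm_stftPhase_factor hℏ hε (hq _), P]
  refine le_antisymm (iSup_le fun x => ?_)
    (le_iSup_of_le (WithLp.toLp 2 fun j => -ξ j / P j) (le_of_eq ?_))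
  · rw [hnorm]
    have henv (j : Fin n) := gaussEnvelope_nonneg hℏ.le ε (q j) (ξ j)
    refine ENNReal.ofReal_le_ofReal
      (Finset.prod_le_prod (fun j _ => mul_nonneg (henv j) (Real.exp_nonneg _)) fun j _ => ?_)
    refine mul_le_of_le_one_right (henv j) (Real.exp_le_one_iff.2 (neg_nonpos.2 ?_))
    have := hq j
    have := hP j
    positivity
  · rw [hnorm]
    congr 1
    refine Finset.prod_congr rfl fun j _ => ?_
    have : P j * (-ξ j / P j) + ξ j = 0 := by field_simp [(hP j).ne']; ring
    simp [this]

theorem integral_gaussEnvelope {ℏ ε q : ℝ} (hℏ : 0 < ℏ) (hε : 0 < ε) (hq : 0 ≤ q) :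
    ∫ t, gaussEnvelope ℏ ε q t = ((q + ε) ^ 2 + 1) ^ ((1 : ℝ) / 4) *
      ((1 + ε * (q + ε)) / (ε * (q ^ 2 + 2 * q * ε + 1 + ε ^ 2))) ^ ((1 : ℝ) / 2) := by
  simp only [gaussEnvelope]
  set B := (q + ε) ^ 2 + 1
  set P := 1 + ε * (q + ε)
  have hB : 0 < B := by positivity
  have hP : 0 < P := by positivity
  have h14 : (B ^ (1 / 4 : ℝ)) ^ 2 = √B := by
    rw [← Real.rpow_natCast, ← Real.rpow_mul hB.le, Real.sqrt_eq_rpow]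
    norm_num
  rw [integral_const_mul, integral_gaussian, show q ^ 2 + 2 * q * ε + 1 + ε ^ 2 = B by ring,
    ← sq_eq_sq₀ (by positivity) (by positivity), mul_pow, mul_pow, mul_pow,
    Real.sq_sqrt (by positivity), Real.sq_sqrt (by positivity), ← Real.sqrt_eq_rpow,
    Real.sq_sqrt (by positivity), h14]
  field_simp
  rw [Real.sq_sqrt hB.le]

theorem integrable_gaussEnvelope {ℏ ε q : ℝ} (hℏ : 0 < ℏ) (hε : 0 < ε) (hq : 0 ≤ q) :
    Integrable (gaussEnvelope ℏ ε q) :=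
  (integrable_exp_neg_mul_sq (by positivity)).const_mul _

theorem Msjo_gwin_dampedChirp {ℏ ε : ℝ} (hℏ : 0 < ℏ) (hε : 0 < ε) {n : ℕ} {q : Fin n → ℝ}
    (hq : ∀ j, 0 ≤ q j) :
    Msjo ℏ (gwin ℏ q) (dampedChirp ℏ ε) =
      ENNReal.ofReal (∏ j, ∫ t, gaussEnvelope ℏ ε (q j) t) := by
  rw [Msjo, lintegral_congr fun ξ => iSup_enorm_STFT_gwin_dampedChirp hℏ hε hq ξ,
    ← ofReal_integral_eq_lintegral_ofReal
      (integrable_euclideanSpace_prod fun j => integrable_gaussEnvelope hℏ hε (hq j))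
      (.of_forall fun ξ => Finset.prod_nonneg fun j _ => gaussEnvelope_nonneg hℏ.le ε (q j) (ξ j)),
    integral_euclideanSpace_prod_eq_prod]

/-- Gaussian test functions — exact Fresnel integral and exact
`M^{∞,1}` norm with Gaussian window. -/
theorem fresnel_gaussian_lower_bound (ℏ : ℝ) (hℏ : 0 < ℏ) (n : ℕ)
    (q : Fin n → ℝ) (hq : ∀ j, 0 < q j) (ε : ℝ) (hε : 0 < ε)
    (f : Ed n → ℂ)
    (hf : f = fun x => Complex.exp (-((ε : ℂ) + Complex.I) * ((‖x‖ ^ 2 : ℝ) : ℂ) /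
      (2 * (ℏ : ℂ)))) :
    (∀ φ : SchwartzMap (Ed n) ℂ, φ 0 = 1 →
      Tendsto
        (fun ε' : ℝ =>
          (((2 * Real.pi : ℝ) : ℂ) * Complex.I * (ℏ : ℂ)) ^ (-(n : ℂ) / 2) *
            ∫ x : Ed n,
              Complex.exp (Complex.I * ((‖x‖ ^ 2 : ℝ) : ℂ) / (2 * (ℏ : ℂ))) *
                f x * φ (ε' • x))
        (𝓝[>] (0 : ℝ)) (𝓝 ((Complex.I * (ε : ℂ)) ^ (-(n : ℂ) / 2)))) ∧
    Msjo ℏ (gwin ℏ q) f =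
      ENNReal.ofReal (∏ j, ((q j + ε) ^ 2 + 1) ^ ((1 : ℝ) / 4) *
        ((1 + ε * (q j + ε)) / (ε * ((q j) ^ 2 + 2 * q j * ε + 1 + ε ^ 2))) ^
          ((1 : ℝ) / 2)) := by
  subst hf
  refine ⟨fun φ hφ => tendsto_fresnel_integral_dampedChirp hℏ hε φ hφ,
    (Msjo_gwin_dampedChirp hℏ hε fun j => (hq j).le).trans ?_⟩
  simp only [integral_gaussEnvelope hℏ hε (hq _).le]
end
end

section
/- Consistency of the M^{∞,1} norm under cylindrical extension: let m ≤ n, q₁,…,q_n > 0, and g_k(x) = (2πℏ)^{-k/2} e^{-∑_{j=1}^{k} q_j x_j²/(2ℏ)} for x ∈ ℝ^k. For f_m ∈ M^{∞,1}(ℝ^m), define its extension E_m^n f_m(x₁,…,x_n) = f_m(x₁,…,x_m). Then ‖E_m^n f_m‖_{M^{∞,1}_{(g_n)}(ℝⁿ)} = ‖f_m‖_{M^{∞,1}_{(g_m)}(ℝ^m)}. -/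
open MeasureTheory Complex Filter
open scoped RealInnerProductSpace ENNReal Topology

noncomputable section

/-! The Gaussian window on `ℝ^{m+k} = ℝ^m × ℝ^k` is the tensor product of the Gaussian windows on
the two factors, so the STFT of `f ⊗ 1` is `V f (x', ξ') · V 1 (x'', ξ'')`. Completing the square,
`|V 1 (x'', ξ'')|` is a product of centred Gaussian densities in the `ξ''ⱼ` (variances `ℏ qⱼ`) and
does not depend on `x''`. Hence the supremum over `x` factors, and integrating over `ξ''`
contributes exactly `1`. Since `ξ' ↦ sup_{x'} |V f (x', ξ')|` need not be measurable, this last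
step uses a Tonelli identity that only asks for measurability of the other factor. -/

open ProbabilityTheory
open scoped Real NNReal

theorem lintegral_prod_mul_of_aemeasurable_right {α β : Type*} [MeasurableSpace α]
    [MeasurableSpace β] {μ : Measure α} {ν : Measure β} [SFinite μ] [SFinite ν]
    (f : α → ℝ≥0∞) {g : β → ℝ≥0∞} (hg : AEMeasurable g ν) (hg_ne_top : ∫⁻ y, g y ∂ν ≠ ⊤) :
    ∫⁻ p, f p.1 * g p.2 ∂μ.prod ν = (∫⁻ x, f x ∂μ) * ∫⁻ y, g y ∂ν := by
  apply le_antisymm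
  · obtain ⟨G, hG, hG_le, hG_eq⟩ :=
      exists_measurable_le_lintegral_eq (μ.prod ν) fun p => f p.1 * g p.2
    rw [hG_eq, lintegral_prod _ hG.aemeasurable, ← lintegral_mul_const' _ _ hg_ne_top]
    refine lintegral_mono fun x => ?_
    calc ∫⁻ y, G (x, y) ∂ν ≤ ∫⁻ y, f x * g y ∂ν := lintegral_mono fun y => hG_le (x, y)
      _ = f x * ∫⁻ y, g y ∂ν := lintegral_const_mul'' _ hg
  · obtain ⟨f', hf', hf'_le, hf'_eq⟩ := exists_measurable_le_lintegral_eq μ f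
    rw [hf'_eq, ← lintegral_prod_mul hf'.aemeasurable hg]
    exact lintegral_mono fun p => mul_le_mul_left (hf'_le p.1) _

theorem Real.rpow_neg_half_mul_self {x : ℝ} (hx : 0 < x) :
    x ^ (-(1 / 2 : ℝ)) * x ^ (-(1 / 2 : ℝ)) = x⁻¹ := by
  rw [← Real.rpow_add hx]
  norm_num [Real.rpow_neg_one]

theorem ofReal_cpow_neg_nat_div_two {x : ℝ} (hx : 0 ≤ x) (k : ℕ) :
    (x : ℂ) ^ (-(k : ℂ) / 2) = ((x ^ (-(1 / 2 : ℝ)) : ℝ) : ℂ) ^ k := by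
  rw [ofReal_cpow hx, ← cpow_nat_mul]
  congr 1
  push_cast
  ring

theorem cpow_neg_nat_div_two_add {c : ℂ} (hc : c ≠ 0) (m k : ℕ) :
    c ^ (-((m + k : ℕ) : ℂ) / 2) = c ^ (-(m : ℂ) / 2) * c ^ (-(k : ℂ) / 2) := by
  rw [← cpow_add _ _ hc]
  congr 1
  push_cast
  ring

namespace EuclideanSpace

variable {m k : ℕ}

@[simp]
theorem finAddEquivProd_fst_apply (y : Ed (m + k)) (i : Fin m) :
    (finAddEquivProd y).1 i = y (Fin.castAdd k i) := by
  simp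

@[simp]
theorem finAddEquivProd_snd_apply (y : Ed (m + k)) (j : Fin k) :
    (finAddEquivProd y).2 j = y (Fin.natAdd m j) := by
  simp

theorem volume_preserving_finAddEquivProd :
    MeasurePreserving (finAddEquivProd : Ed (m + k) ≃L[ℝ] Ed m × Ed k) :=
  (WithLp.volume_preserving_ofLp _ _).comp <|
    (PiLp.sumPiLpEquivProdLpPiLp 2 fun _ => ℝ).measurePreserving.comp
      (LinearIsometryEquiv.piLpCongrLeft 2 ℝ ℝ finSumFinEquiv.symm).measurePreserving

theorem inner_eq_inner_finAddEquivProd (ξ y : Ed (m + k)) :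
    ⟪ξ, y⟫ = ⟪(finAddEquivProd ξ).1, (finAddEquivProd y).1⟫ +
      ⟪(finAddEquivProd ξ).2, (finAddEquivProd y).2⟫ := by
  simp [PiLp.inner_apply, Fin.sum_univ_add]

end EuclideanSpace

theorem lintegral_prod_gaussianPDFReal {ι : Type*} [Fintype ι] (μ : ι → ℝ) {v : ι → ℝ≥0}
    (hv : ∀ i, v i ≠ 0) :
    ∫⁻ ξ : EuclideanSpace ℝ ι, ENNReal.ofReal (∏ i, gaussianPDFReal (μ i) (v i) (ξ i)) = 1 := by
  rw [← (PiLp.volume_preserving_toLp ι).lintegral_comp_emb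
    (MeasurableEquiv.toLp 2 _).measurableEmbedding, volume_pi,
    ← ofReal_integral_eq_lintegral_ofReal
      (Integrable.fintype_prod fun i => integrable_gaussianPDFReal (μ i) (v i))
      (ae_of_all _ fun _ => Finset.prod_nonneg fun i _ => gaussianPDFReal_nonneg _ _ _)]
  simp [integral_fintype_prod_eq_prod, integral_gaussianPDFReal_eq_one _ (hv _)]

def gaussianWindow (ℏ c t : ℝ) : ℝ := (2 * π * ℏ) ^ (-(1 / 2 : ℝ)) * rexp (-(c * t ^ 2) / (2 * ℏ))

theorem integral_cexp_mul_gaussianWindow {ℏ c : ℝ} (hℏ : 0 < ℏ) (hc : 0 < c) (a τ : ℝ) :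
    (((2 * π * ℏ) ^ (-(1 / 2 : ℝ)) : ℝ) : ℂ) *
        ∫ t : ℝ, cexp (-(I / ℏ) * (τ * t)) * gaussianWindow ℏ c (t - a) =
      gaussianPDFReal 0 (ℏ * c).toNNReal τ * cexp (-(I / ℏ) * (τ * a)) := by
  have h2πℏ : 0 < 2 * π * ℏ := by positivity
  have hc' : (c : ℂ) ≠ 0 := ofReal_ne_zero.2 hc.ne'
  have hb : (-(c / (2 * ℏ)) : ℂ).re < 0 := by
    have : 0 < c / (2 * ℏ) := by positivity
    simpa [← ofReal_ofNat, ← ofReal_mul, ← ofReal_div] using this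
  have hquadratic : ∀ t : ℝ, cexp (-(I / ℏ) * (τ * t)) * gaussianWindow ℏ c (t - a) =
      (((2 * π * ℏ) ^ (-(1 / 2 : ℝ)) : ℝ) : ℂ) *
        cexp (-(c / (2 * ℏ)) * t ^ 2 + ((c * a - I * τ) / ℏ) * t + -(c * a ^ 2 / (2 * ℏ))) := by
    intro t
    simp only [gaussianWindow, ofReal_mul, ofReal_exp]
    rw [mul_left_comm, ← Complex.exp_add]
    congr 1
    push_cast
    field_simp
    ring_nf
  have hsqrt : ((π : ℂ) / -(-(c / (2 * ℏ)))) ^ (1 / 2 : ℂ) = (√(2 * π * ℏ / c) : ℝ) := by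
    rw [Real.sqrt_eq_rpow, ofReal_cpow (by positivity)]
    push_cast
    congr 1
    field_simp
  have hexponent : -(c * a ^ 2 / (2 * ℏ)) - ((c * a - I * τ) / ℏ) ^ 2 / (4 * -(c / (2 * ℏ))) =
      ((-(τ - 0) ^ 2 / (2 * (ℏ * c)) : ℝ) : ℂ) + -(I / ℏ) * (τ * a) := by
    push_cast
    field_simp
    ring_nf
    rw [I_sq]
    ring
  have hnormalization : (2 * π * ℏ) ^ (-(1 / 2 : ℝ)) * (2 * π * ℏ) ^ (-(1 / 2 : ℝ)) *
      √(2 * π * ℏ / c) = (√(2 * π * (ℏ * c)))⁻¹ := by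
    rw [Real.rpow_neg_half_mul_self h2πℏ, Real.sqrt_div h2πℏ.le, ← mul_assoc,
      Real.sqrt_mul h2πℏ.le]
    field_simp
    rw [Real.sq_sqrt h2πℏ.le]
  simp_rw [hquadratic]
  rw [integral_const_mul, integral_cexp_quadratic hb, hsqrt, hexponent, Complex.exp_add,
    ← ofReal_exp, ← mul_assoc, ← mul_assoc, ← mul_assoc]
  norm_cast
  rw [gaussianPDFReal, Real.coe_toNNReal _ (by positivity), hnormalization]

section STFT

open EuclideanSpace

variable {ℏ : ℝ}

theorem gwin_eq_prod (hℏ : 0 ≤ ℏ) {k : ℕ} (q : Fin k → ℝ) (z : Ed k) :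
    gwin ℏ q z = ∏ j, (gaussianWindow ℏ (q j) (z j) : ℂ) := by
  rw [gwin, ofReal_cpow_neg_nat_div_two (by positivity)]
  simp only [gaussianWindow, ofReal_mul, ofReal_exp, Finset.prod_mul_distrib,
    Finset.prod_const, Finset.card_univ, Fintype.card_fin, ← Complex.exp_sum]
  push_cast
  rw [neg_div, Finset.sum_div, ← Finset.sum_neg_distrib]
  simp only [neg_div]

theorem STFT_gwin_one (hℏ : 0 ≤ ℏ) {k : ℕ} (q : Fin k → ℝ) (x ξ : Ed k) :
    STFT ℏ (gwin ℏ q) (fun _ => 1) x ξ = ∏ j, (((2 * π * ℏ) ^ (-(1 / 2 : ℝ)) : ℝ) : ℂ) *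
      ∫ t : ℝ, cexp (-(I / ℏ) * (ξ j * t)) * gaussianWindow ℏ (q j) (t - x j) := by
  have hintegrand : ∀ y : Ed k,
      cexp (-(I / ℏ) * (⟪ξ, y⟫ : ℝ)) * 1 * starRingEnd ℂ (gwin ℏ q (y - x)) =
        ∏ j, cexp (-(I / ℏ) * (ξ j * y j)) * gaussianWindow ℏ (q j) (y j - x j) := by
    intro y
    simp only [gwin_eq_prod hℏ, map_prod, conj_ofReal, mul_one, Finset.prod_mul_distrib,
      ← Complex.exp_sum, ← Finset.mul_sum, PiLp.inner_apply, PiLp.sub_apply]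
    congr 3
    push_cast
    simp [mul_comm]
  rw [STFT, ofReal_cpow_neg_nat_div_two (by positivity)]
  simp_rw [hintegrand]
  rw [← (PiLp.volume_preserving_toLp (Fin k)).integral_comp
    (MeasurableEquiv.toLp 2 _).measurableEmbedding,
    integral_fintype_prod_volume_eq_prod
      fun j (t : ℝ) => cexp (-(I / ℏ) * (ξ j * t)) * gaussianWindow ℏ (q j) (t - x j),
    Finset.prod_mul_distrib, Finset.prod_const, Finset.card_univ, Fintype.card_fin]

theorem norm_STFT_gwin_one (hℏ : 0 < ℏ) {k : ℕ} {q : Fin k → ℝ} (hq : ∀ j, 0 < q j)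
    (x ξ : Ed k) :
    ‖STFT ℏ (gwin ℏ q) (fun _ => 1) x ξ‖ = ∏ j, gaussianPDFReal 0 (ℏ * q j).toNNReal (ξ j) := by
  rw [STFT_gwin_one hℏ.le, norm_prod]
  refine Finset.prod_congr rfl fun j _ => ?_
  rw [integral_cexp_mul_gaussianWindow hℏ (hq j), norm_mul, norm_real,
    Real.norm_of_nonneg (gaussianPDFReal_nonneg _ _ _), Complex.norm_exp]
  simp

variable {m k : ℕ}

theorem gwin_finAddEquivProd (hℏ : ℏ ≠ 0) (q : Fin (m + k) → ℝ) (y : Ed (m + k)) :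
    gwin ℏ q y = gwin ℏ (fun i => q (Fin.castAdd k i)) (finAddEquivProd y).1 *
      gwin ℏ (fun j => q (Fin.natAdd m j)) (finAddEquivProd y).2 := by
  have h2πℏ : ((2 * π * ℏ : ℝ) : ℂ) ≠ 0 := by simp [hℏ, Real.pi_ne_zero]
  simp only [gwin, cpow_neg_nat_div_two_add h2πℏ, Fin.sum_univ_add, finAddEquivProd_fst_apply,
    finAddEquivProd_snd_apply, ofReal_add, neg_add, add_div, Complex.exp_add]
  ring

theorem STFT_gwin_finAddEquivProd (hℏ : ℏ ≠ 0) (q : Fin (m + k) → ℝ) (f : Ed m → ℂ)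
    (g : Ed k → ℂ) (x ξ : Ed (m + k)) :
    STFT ℏ (gwin ℏ q) (fun y => f (finAddEquivProd y).1 * g (finAddEquivProd y).2) x ξ =
      STFT ℏ (gwin ℏ fun i => q (Fin.castAdd k i)) f (finAddEquivProd x).1 (finAddEquivProd ξ).1 *
      STFT ℏ (gwin ℏ fun j => q (Fin.natAdd m j)) g
        (finAddEquivProd x).2 (finAddEquivProd ξ).2 := by
  set σ : Ed (m + k) ≃L[ℝ] Ed m × Ed k := finAddEquivProd
  set A : Ed m → ℂ := fun u => cexp (-(I / ℏ) * (⟪(σ ξ).1, u⟫ : ℝ)) * f u *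
    starRingEnd ℂ (gwin ℏ (fun i => q (Fin.castAdd k i)) (u - (σ x).1))
  set B : Ed k → ℂ := fun v => cexp (-(I / ℏ) * (⟪(σ ξ).2, v⟫ : ℝ)) * g v *
    starRingEnd ℂ (gwin ℏ (fun j => q (Fin.natAdd m j)) (v - (σ x).2))
  have hintegrand : ∀ y, cexp (-(I / ℏ) * (⟪ξ, y⟫ : ℝ)) * (f (σ y).1 * g (σ y).2) *
      starRingEnd ℂ (gwin ℏ q (y - x)) = A (σ y).1 * B (σ y).2 := by
    intro y
    simp only [A, B, inner_eq_inner_finAddEquivProd ξ y, gwin_finAddEquivProd hℏ q (y - x),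
      map_sub, Prod.fst_sub, Prod.snd_sub, ofReal_add, mul_add, Complex.exp_add, map_mul]
    ring
  have hintegral : ∫ y, A (σ y).1 * B (σ y).2 = (∫ u, A u) * ∫ v, B v := by
    rw [volume_preserving_finAddEquivProd.integral_comp σ.toHomeomorph.measurableEmbedding
      (fun p => A p.1 * B p.2), Measure.volume_eq_prod, integral_prod_mul]
  have h2πℏ : ((2 * π * ℏ : ℝ) : ℂ) ≠ 0 := by simp [hℏ, Real.pi_ne_zero]
  simp only [STFT]
  simp_rw [hintegrand]
  rw [hintegral, cpow_neg_nat_div_two_add h2πℏ]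
  ring

theorem iSup_enorm_STFT_gwin_comp_fst (hℏ : 0 < ℏ) {q : Fin (m + k) → ℝ} (hq : ∀ j, 0 < q j)
    (f : Ed m → ℂ) (ξ : Ed (m + k)) :
    ⨆ x, ‖STFT ℏ (gwin ℏ q) (fun y => f (finAddEquivProd y).1) x ξ‖ₑ =
      (⨆ x', ‖STFT ℏ (gwin ℏ fun i => q (Fin.castAdd k i)) f x' (finAddEquivProd ξ).1‖ₑ) *
        ENNReal.ofReal
          (∏ j, gaussianPDFReal 0 (ℏ * q (Fin.natAdd m j)).toNNReal ((finAddEquivProd ξ).2 j)) := by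
  set σ : Ed (m + k) ≃L[ℝ] Ed m × Ed k := finAddEquivProd
  have hfactor : ∀ x, ‖STFT ℏ (gwin ℏ q) (fun y => f (σ y).1) x ξ‖ₑ =
      ‖STFT ℏ (gwin ℏ fun i => q (Fin.castAdd k i)) f (σ x).1 (σ ξ).1‖ₑ *
        ENNReal.ofReal (∏ j, gaussianPDFReal 0 (ℏ * q (Fin.natAdd m j)).toNNReal ((σ ξ).2 j)) := by
    intro x
    have h := STFT_gwin_finAddEquivProd hℏ.ne' q f (fun _ => 1) x ξ
    simp only [mul_one] at h
    rw [h, enorm_mul, ← norm_STFT_gwin_one hℏ (fun j => hq _) (σ x).2, ofReal_norm]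
  simp_rw [hfactor, ← ENNReal.iSup_mul]
  congr 1
  exact (Prod.fst_surjective.comp σ.surjective).iSup_comp
    fun x' => ‖STFT ℏ (gwin ℏ fun i => q (Fin.castAdd k i)) f x' (σ ξ).1‖ₑ

end STFT

theorem Msjo_cylindrical_extension_consistency_general (ℏ : ℝ) (hℏ : 0 < ℏ)
    (m n : ℕ) (hmn : m ≤ n) (q : Fin n → ℝ) (hq : ∀ j, 0 < q j)
    (fm : Ed m → ℂ) :
    Msjo ℏ (gwin ℏ q)
        (fun x : Ed n => fm (show Ed m from WithLp.toLp 2 (fun i : Fin m => x (Fin.castLE hmn i)))) =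
      Msjo ℏ (gwin ℏ (fun i : Fin m => q (Fin.castLE hmn i))) fm := by
  -- after `n = m + k`, `Fin.castLE hmn` is `Fin.castAdd k` and the extension is `fm ∘ Prod.fst ∘ σ`,
  -- both definitionally
  obtain ⟨k, rfl⟩ := Nat.exists_eq_add_of_le hmn
  set σ : Ed (m + k) ≃L[ℝ] Ed m × Ed k := EuclideanSpace.finAddEquivProd
  set S : Ed m → ℝ≥0∞ := fun ξ' => ⨆ x', ‖STFT ℏ (gwin ℏ fun i => q (Fin.castAdd k i)) fm x' ξ'‖ₑ
  set H : Ed k → ℝ≥0∞ := fun ξ'' =>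
    ENNReal.ofReal (∏ j, gaussianPDFReal 0 (ℏ * q (Fin.natAdd m j)).toNNReal (ξ'' j))
  have hH : ∫⁻ ξ'', H ξ'' = 1 :=
    lintegral_prod_gaussianPDFReal _ fun j => by simpa using mul_pos hℏ (hq _)
  calc _ = ∫⁻ ξ, S (σ ξ).1 * H (σ ξ).2 :=
        lintegral_congr fun ξ => iSup_enorm_STFT_gwin_comp_fst hℏ hq fm ξ
    _ = ∫⁻ p : Ed m × Ed k, S p.1 * H p.2 :=
        EuclideanSpace.volume_preserving_finAddEquivProd.lintegral_comp_emb
          σ.toHomeomorph.measurableEmbedding fun p => S p.1 * H p.2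
    _ = (∫⁻ ξ', S ξ') * ∫⁻ ξ'', H ξ'' := by
        rw [Measure.volume_eq_prod]
        exact lintegral_prod_mul_of_aemeasurable_right S (by fun_prop) (hH ▸ ENNReal.one_ne_top)
    _ = _ := by
        rw [hH, mul_one]
        rfl

/-- the `M^{∞,1}` norm with Gaussian windows is consistent under
cylindrical extension: `‖E_m^n f_m‖_{M^{∞,1}_{(g_n)}(ℝⁿ)} = ‖f_m‖_{M^{∞,1}_{(g_m)}(ℝ^m)}`. -/
theorem Msjo_cylindrical_extension_consistency (ℏ : ℝ) (hℏ : 0 < ℏ)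
    (m n : ℕ) (hmn : m ≤ n) (q : Fin n → ℝ) (hq : ∀ j, 0 < q j)
    (fm : Ed m → ℂ) (hfc : Continuous fm)
    (hfM : Msjo ℏ (gwin ℏ (fun i : Fin m => q (Fin.castLE hmn i))) fm ≠ ⊤) :
    Msjo ℏ (gwin ℏ q)
        (fun x : Ed n => fm (show Ed m from WithLp.toLp 2 (fun i : Fin m => x (Fin.castLE hmn i)))) =
      Msjo ℏ (gwin ℏ (fun i : Fin m => q (Fin.castLE hmn i))) fm :=
  Msjo_cylindrical_extension_consistency_general ℏ hℏ m n hmn q hq fm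
end
end

section
/- Non-Cauchy property of plane-wave cylindrical approximations: let k ∈ ℝ^ℕ and k_n = (k₁,…,k_n,0,0,…). Define cylinder functions f_n(x) = e^{(i/ℏ) k_n·x} on ℝ^ℕ. With Gaussian windows g_n(x)=(2πℏ)^{-n/2}e^{-⟨x,Qx⟩/(2ℏ)}, Q=diag(q₁,…,q_n), q_j>0, and the cylinder norm ‖f_n - f_m‖ := ‖\tilde f_n - E_m^n \tilde f_m‖_{M^{∞,1}_{(g_n)}(ℝⁿ)} (n > m), one has ‖f_n - f_m‖ = 2 whenever (k_{m+1},…,k_n) ≠ 0. Hence if k has infinitely many nonzero entries, (f_n) is not a Cauchy sequence. -/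
open MeasureTheory Complex Filter
open scoped RealInnerProductSpace ENNReal Topology

noncomputable section

/-- The cylinder plane wave `x ↦ e^{(i/ℏ) ∑_{j<m} k_j x_j}` viewed as a function on ℝⁿ. -/
def planeWave (ℏ : ℝ) (k : ℕ → ℝ) (m n : ℕ) (hmn : m ≤ n) : Ed n → ℂ :=
  fun x => Complex.exp ((Complex.I / (ℏ : ℂ)) *
    ((∑ j : Fin m, k (j : ℕ) * x (Fin.castLE hmn j) : ℝ) : ℂ))

/-!
The STFT of a plane wave `y ↦ e^{i⟪c, y⟫/ℏ}` against the diagonal Gaussian window factors over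
the coordinates into one-dimensional Gaussian Fourier integrals, and equals
`N_c(ξ) e^{i⟪c - ξ, x⟫/ℏ}`, where `N_c` is the Gaussian density with mean `c` and covariance `ℏQ`.
For `c₁ ≠ c₂` the moduli of the two transforms do not depend on `x`, while their phases differ by
`⟪c₁ - c₂, x⟫/ℏ`, which equals `π` for a suitable `x`. So the supremum over `x` of
`|V(f₁ - f₂)(x, ξ)|` is `N_{c₁}(ξ) + N_{c₂}(ξ)`, whose integral over `ξ` is `2`.
-/

open Real ProbabilityTheory
open scoped NNReal

namespace PlaneWave

section EuclideanProduct

variable {ι 𝕜 : Type*} [Fintype ι] [RCLike 𝕜]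

theorem integral_euclideanSpace_prod (f : ι → ℝ → 𝕜) :
    ∫ x : EuclideanSpace ℝ ι, ∏ i, f i (x i) = ∏ i, ∫ t, f i t := by
  rw [← (PiLp.volume_preserving_toLp ι).integral_comp
    (MeasurableEquiv.toLp 2 _).measurableEmbedding]
  exact integral_fintype_prod_volume_eq_prod f

theorem integrable_euclideanSpace_prod {f : ι → ℝ → 𝕜} (hf : ∀ i, Integrable (f i)) :
    Integrable (fun x : EuclideanSpace ℝ ι => ∏ i, f i (x i)) := by
  rw [← (PiLp.volume_preserving_toLp ι).integrable_comp_emb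
    (MeasurableEquiv.toLp 2 _).measurableEmbedding]
  exact Integrable.fintype_prod hf

end EuclideanProduct

def gaussianPDFPi {ι : Type*} [Fintype ι] (μ : EuclideanSpace ℝ ι) (v : ι → ℝ≥0)
    (x : EuclideanSpace ℝ ι) : ℝ :=
  ∏ i, gaussianPDFReal (μ i) (v i) (x i)

section GaussianPDFPi

variable {ι : Type*} [Fintype ι] {v : ι → ℝ≥0}

theorem gaussianPDFPi_nonneg (μ : EuclideanSpace ℝ ι) (v : ι → ℝ≥0) (x : EuclideanSpace ℝ ι) :
    0 ≤ gaussianPDFPi μ v x :=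
  Finset.prod_nonneg fun _ _ => gaussianPDFReal_nonneg _ _ _

theorem integrable_gaussianPDFPi (μ : EuclideanSpace ℝ ι) (v : ι → ℝ≥0) :
    Integrable (gaussianPDFPi μ v) :=
  integrable_euclideanSpace_prod fun i => integrable_gaussianPDFReal (μ i) (v i)

theorem integral_gaussianPDFPi_eq_one (μ : EuclideanSpace ℝ ι) (hv : ∀ i, v i ≠ 0) :
    ∫ x, gaussianPDFPi μ v x = 1 := by
  simp only [gaussianPDFPi, integral_euclideanSpace_prod,
    integral_gaussianPDFReal_eq_one _ (hv _), Finset.prod_const_one]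

end GaussianPDFPi

def gaborAtom (ℏ q a x t : ℝ) : ℂ :=
  Complex.exp (((a * t / ℏ : ℝ) : ℂ) * I - ((q * (t - x) ^ 2 / (2 * ℏ) : ℝ) : ℂ))

section GaborAtom

variable {ℏ q : ℝ}

theorem gaborAtom_eq_cexp_quadratic (a x : ℝ) :
    gaborAtom ℏ q a x = fun t : ℝ => Complex.exp (-((q / (2 * ℏ) : ℝ) : ℂ) * (t : ℂ) ^ 2 +
      ((a / ℏ : ℝ) * I + ((q * x / ℏ : ℝ) : ℂ)) * t + -((q * x ^ 2 / (2 * ℏ) : ℝ) : ℂ)) := by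
  funext t
  simp only [gaborAtom]
  congr 1
  push_cast
  ring

theorem integrable_gaborAtom (hℏ : 0 < ℏ) (hq : 0 < q) (a x : ℝ) :
    Integrable (gaborAtom ℏ q a x) := by
  rw [gaborAtom_eq_cexp_quadratic]
  exact integrable_cexp_quadratic (by rw [Complex.ofReal_re]; positivity) _ _

theorem integral_gaborAtom (hℏ : 0 < ℏ) (hq : 0 < q) (c ξ x : ℝ) :
    ∫ t, gaborAtom ℏ q (c - ξ) x t
      = ((2 * π * ℏ * gaussianPDFReal c (ℏ * q).toNNReal ξ : ℝ) : ℂ) *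
        Complex.exp (((c - ξ) * x / ℏ : ℝ) * I) := by
  rw [gaborAtom_eq_cexp_quadratic, integral_cexp_quadratic
    (by rw [neg_re, ofReal_re, neg_lt_zero]; positivity)]
  have hv : (((ℏ * q).toNNReal : ℝ≥0) : ℝ) = ℏ * q := Real.coe_toNNReal _ (by positivity)
  have hsqrt :
      ((π : ℂ) / -(-((q / (2 * ℏ) : ℝ) : ℂ))) ^ (1 / 2 : ℂ) = ((√(2 * π * ℏ / q) : ℝ) : ℂ) := by
    rw [neg_neg, ← ofReal_div, sqrt_eq_rpow, ofReal_cpow (by positivity)]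
    congr 2
    · field_simp
    · push_cast; ring
  have hexponent : -((q * x ^ 2 / (2 * ℏ) : ℝ) : ℂ)
      - (((c - ξ) / ℏ : ℝ) * I + ((q * x / ℏ : ℝ) : ℂ)) ^ 2 / (4 * -((q / (2 * ℏ) : ℝ) : ℂ))
      = ((-(ξ - c) ^ 2 / (2 * (ℏ * q)) : ℝ) : ℂ) + (((c - ξ) * x / ℏ : ℝ) * I) := by
    have : (ℏ : ℂ) ≠ 0 := ofReal_ne_zero.2 hℏ.ne'
    have : (q : ℂ) ≠ 0 := ofReal_ne_zero.2 hq.ne'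
    push_cast
    field_simp
    ring_nf
    rw [I_sq]
    ring
  have hnorm : √(2 * π * ℏ / q) = 2 * π * ℏ * (√(2 * π * (ℏ * q)))⁻¹ := by
    have hs : 0 < 2 * π * ℏ := by positivity
    rw [← mul_assoc, sqrt_mul hs.le, sqrt_div' _ hq.le]
    field_simp
    rw [sq_sqrt hs.le]
  rw [hsqrt, hexponent, Complex.exp_add, ← ofReal_exp, gaussianPDFReal, hv, hnorm]
  push_cast
  ring

end GaborAtom

def wave (ℏ : ℝ) {n : ℕ} (c y : Ed n) : ℂ :=
  Complex.exp (((⟪c, y⟫ / ℏ : ℝ) : ℂ) * I)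

theorem ofReal_cpow_neg_natCast_div_two {s : ℝ} (hs : 0 ≤ s) (n : ℕ) :
    (s : ℂ) ^ (-(n : ℂ) / 2) = ((s ^ (-(n : ℝ) / 2) : ℝ) : ℂ) := by
  rw [ofReal_cpow hs]
  push_cast
  ring_nf

section STFT

variable {ℏ : ℝ} {n : ℕ}

theorem gwin_eq_ofReal (hℏ : 0 ≤ ℏ) (q : Fin n → ℝ) (z : Ed n) :
    gwin ℏ q z = (((2 * π * ℏ) ^ (-(n : ℝ) / 2) *
      Real.exp (-(∑ j, q j * z j ^ 2) / (2 * ℏ)) : ℝ) : ℂ) := by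
  rw [gwin, ofReal_cpow_neg_natCast_div_two (by positivity), ofReal_mul, ofReal_exp]
  push_cast
  rfl

theorem stft_integrand_wave_eq_prod (hℏ : 0 ≤ ℏ) (q : Fin n → ℝ) (c x ξ y : Ed n) :
    Complex.exp (-(I / ℏ) * (⟪ξ, y⟫ : ℂ)) * wave ℏ c y * starRingEnd ℂ (gwin ℏ q (y - x))
      = ((2 * π * ℏ) ^ (-(n : ℝ) / 2) : ℝ) * ∏ j, gaborAtom ℏ (q j) (c j - ξ j) (x j) (y j) := by
  rw [gwin_eq_ofReal hℏ, conj_ofReal, ofReal_mul, ofReal_exp, mul_left_comm, wave,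
    ← Complex.exp_add, ← Complex.exp_add]
  simp only [gaborAtom, ← Complex.exp_sum, PiLp.inner_apply, RCLike.inner_apply, conj_trivial,
    PiLp.sub_apply]
  congr 2
  push_cast
  simp only [Finset.mul_sum, Finset.sum_div, Finset.sum_mul, ← Finset.sum_neg_distrib,
    ← Finset.sum_add_distrib]
  refine Finset.sum_congr rfl fun j _ => ?_
  ring

variable {q : Fin n → ℝ}

theorem integrable_stft_integrand_wave (hℏ : 0 < ℏ) (hq : ∀ j, 0 < q j) (c x ξ : Ed n) :
    Integrable fun y =>
      Complex.exp (-(I / ℏ) * (⟪ξ, y⟫ : ℂ)) * wave ℏ c y * starRingEnd ℂ (gwin ℏ q (y - x)) := by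
  simp_rw [stft_integrand_wave_eq_prod hℏ.le]
  exact (integrable_euclideanSpace_prod fun j => integrable_gaborAtom hℏ (hq j) _ _).const_mul _

theorem stft_wave (hℏ : 0 < ℏ) (hq : ∀ j, 0 < q j) (c x ξ : Ed n) :
    STFT ℏ (gwin ℏ q) (wave ℏ c) x ξ
      = gaussianPDFPi c (fun j => (ℏ * q j).toNNReal) ξ *
        Complex.exp ((⟪c - ξ, x⟫ / ℏ : ℝ) * I) := by
  have hs : 0 < 2 * π * ℏ := by positivity
  have hnorm :
      (2 * π * ℏ) ^ (-(n : ℝ) / 2) * (2 * π * ℏ) ^ (-(n : ℝ) / 2) * (2 * π * ℏ) ^ n = 1 := by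
    rw [← rpow_add hs, ← rpow_natCast, ← rpow_add hs]
    simp
  have hphase : ∑ j, (((c j - ξ j) * x j / ℏ : ℝ) : ℂ) * I = ((⟪c - ξ, x⟫ / ℏ : ℝ) : ℂ) * I := by
    rw [← Finset.sum_mul, ← ofReal_sum, ← Finset.sum_div]
    simp only [PiLp.inner_apply, RCLike.inner_apply, conj_trivial, PiLp.sub_apply, mul_comm]
  rw [STFT, ofReal_cpow_neg_natCast_div_two hs.le]
  simp_rw [stft_integrand_wave_eq_prod hℏ.le]
  rw [integral_const_mul, integral_euclideanSpace_prod,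
    Finset.prod_congr rfl fun j _ => integral_gaborAtom hℏ (hq j) (c j) (ξ j) (x j),
    Finset.prod_mul_distrib, ← Complex.exp_sum, ← ofReal_prod, Finset.prod_mul_distrib,
    Finset.prod_const, Finset.card_univ, Fintype.card_fin, hphase, gaussianPDFPi, ← mul_assoc,
    ← ofReal_mul, ← mul_assoc, ← ofReal_mul]
  congr 2
  linear_combination (∏ j, gaussianPDFReal (c j) (ℏ * q j).toNNReal (ξ j)) * hnorm

end STFT

theorem stft_sub {ℏ : ℝ} {n : ℕ} {g f₁ f₂ : Ed n → ℂ} {x ξ : Ed n}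
    (h₁ : Integrable fun y =>
      Complex.exp (-(I / ℏ) * (⟪ξ, y⟫ : ℂ)) * f₁ y * starRingEnd ℂ (g (y - x)))
    (h₂ : Integrable fun y =>
      Complex.exp (-(I / ℏ) * (⟪ξ, y⟫ : ℂ)) * f₂ y * starRingEnd ℂ (g (y - x))) :
    STFT ℏ g (f₁ - f₂) x ξ = STFT ℏ g f₁ x ξ - STFT ℏ g f₂ x ξ := by
  simp only [STFT, Pi.sub_apply, mul_sub, sub_mul]
  rw [integral_sub h₁ h₂, mul_sub]

theorem norm_mul_cexp_sub_mul_cexp_le {a b : ℝ} (ha : 0 ≤ a) (hb : 0 ≤ b) (θ φ : ℝ) :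
    ‖(a : ℂ) * Complex.exp (θ * I) - b * Complex.exp (φ * I)‖ ≤ a + b := by
  refine (norm_sub_le _ _).trans_eq ?_
  simp [norm_exp_ofReal_mul_I, abs_of_nonneg ha, abs_of_nonneg hb]

theorem norm_mul_cexp_add_pi_sub_mul_cexp {a b : ℝ} (ha : 0 ≤ a) (hb : 0 ≤ b) (φ : ℝ) :
    ‖(a : ℂ) * Complex.exp ((φ + π : ℝ) * I) - b * Complex.exp (φ * I)‖ = a + b := by
  rw [ofReal_add, add_mul, Complex.exp_add, exp_pi_mul_I, mul_neg_one, mul_neg, ← neg_add',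
    norm_neg, ← add_mul, ← ofReal_add, norm_mul, norm_exp_ofReal_mul_I, mul_one, norm_real,
    Real.norm_of_nonneg (add_nonneg ha hb)]

section Difference

variable {ℏ : ℝ} {n : ℕ} {q : Fin n → ℝ}

theorem iSup_nnnorm_stft_wave_sub (hℏ : 0 < ℏ) (hq : ∀ j, 0 < q j) {c₁ c₂ : Ed n} (hc : c₁ ≠ c₂)
    (ξ : Ed n) :
    ⨆ x, (‖STFT ℏ (gwin ℏ q) (wave ℏ c₁ - wave ℏ c₂) x ξ‖₊ : ℝ≥0∞)
      = ENNReal.ofReal (gaussianPDFPi c₁ (fun j => (ℏ * q j).toNNReal) ξ +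
          gaussianPDFPi c₂ (fun j => (ℏ * q j).toNNReal) ξ) := by
  have hstft (x : Ed n) : STFT ℏ (gwin ℏ q) (wave ℏ c₁ - wave ℏ c₂) x ξ
      = gaussianPDFPi c₁ (fun j => (ℏ * q j).toNNReal) ξ *
          Complex.exp ((⟪c₁ - ξ, x⟫ / ℏ : ℝ) * I)
        - gaussianPDFPi c₂ (fun j => (ℏ * q j).toNNReal) ξ *
          Complex.exp ((⟪c₂ - ξ, x⟫ / ℏ : ℝ) * I) := by
    rw [stft_sub (integrable_stft_integrand_wave hℏ hq c₁ x ξ)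
      (integrable_stft_integrand_wave hℏ hq c₂ x ξ), stft_wave hℏ hq, stft_wave hℏ hq]
  have h₁ := gaussianPDFPi_nonneg c₁ (fun j => (ℏ * q j).toNNReal) ξ
  have h₂ := gaussianPDFPi_nonneg c₂ (fun j => (ℏ * q j).toNNReal) ξ
  refine le_antisymm (iSup_le fun x => ?_) ?_
  · rw [hstft, ← enorm_eq_nnnorm, ← ofReal_norm]
    exact ENNReal.ofReal_le_ofReal (norm_mul_cexp_sub_mul_cexp_le h₁ h₂ _ _)
  · set x₀ : Ed n := (π * ℏ / ‖c₁ - c₂‖ ^ 2) • (c₁ - c₂)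
    have hphase : ⟪c₁ - ξ, x₀⟫ / ℏ = ⟪c₂ - ξ, x₀⟫ / ℏ + π := by
      have hd : ‖c₁ - c₂‖ ≠ 0 := norm_ne_zero_iff.2 (sub_ne_zero.2 hc)
      have : ⟪c₁ - ξ, x₀⟫ - ⟪c₂ - ξ, x₀⟫ = π * ℏ := by
        rw [← inner_sub_left, sub_sub_sub_cancel_right, inner_smul_right,
          real_inner_self_eq_norm_sq]
        field_simp
      field_simp
      linarith
    refine le_iSup_of_le x₀ ?_
    rw [hstft, ← enorm_eq_nnnorm, ← ofReal_norm, hphase, norm_mul_cexp_add_pi_sub_mul_cexp h₁ h₂]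

theorem msjo_wave_sub (hℏ : 0 < ℏ) (hq : ∀ j, 0 < q j) {c₁ c₂ : Ed n} (hc : c₁ ≠ c₂) :
    Msjo ℏ (gwin ℏ q) (wave ℏ c₁ - wave ℏ c₂) = 2 := by
  set v : Fin n → ℝ≥0 := fun j => (ℏ * q j).toNNReal
  have hv (j : Fin n) : v j ≠ 0 := by simpa [v] using mul_pos hℏ (hq j)
  have hint : Integrable fun ξ => gaussianPDFPi c₁ v ξ + gaussianPDFPi c₂ v ξ :=
    (integrable_gaussianPDFPi _ _).add (integrable_gaussianPDFPi _ _)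
  rw [Msjo, lintegral_congr (iSup_nnnorm_stft_wave_sub hℏ hq hc),
    ← ofReal_integral_eq_lintegral_ofReal hint (Eventually.of_forall fun ξ =>
      add_nonneg (gaussianPDFPi_nonneg _ _ ξ) (gaussianPDFPi_nonneg _ _ ξ)),
    integral_add (integrable_gaussianPDFPi _ _) (integrable_gaussianPDFPi _ _),
    integral_gaussianPDFPi_eq_one _ hv, integral_gaussianPDFPi_eq_one _ hv]
  norm_num

end Difference

def truncationVec (k : ℕ → ℝ) (m n : ℕ) : Ed n :=
  WithLp.toLp 2 fun j => if (j : ℕ) < m then k j else 0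

theorem planeWave_eq_wave (ℏ : ℝ) (k : ℕ → ℝ) {m n : ℕ} (hmn : m ≤ n) :
    planeWave ℏ k m n hmn = wave ℏ (truncationVec k m n) := by
  funext y
  have hsum : ∑ j : Fin m, k j * y (Fin.castLE hmn j) = ⟪truncationVec k m n, y⟫ := by
    simp only [PiLp.inner_apply, RCLike.inner_apply, conj_trivial, truncationVec]
    refine Fintype.sum_of_injective _ (Fin.castLE_injective hmn) _ _ (fun j hj => ?_) fun j => ?_
    · rw [Fin.range_castLE, Set.mem_ofPred_eq] at hj
      simp [hj]
    · simp [mul_comm]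
  rw [planeWave, wave, hsum]
  push_cast
  ring_nf

theorem msjo_planeWave_sub {ℏ : ℝ} (hℏ : 0 < ℏ) (k : ℕ → ℝ) {q : ℕ → ℝ} (hq : ∀ j, 0 < q j)
    {m n : ℕ} (hmn : m < n) {j : Fin n} (hmj : m ≤ (j : ℕ)) (hkj : k j ≠ 0) :
    Msjo ℏ (gwin ℏ (fun j : Fin n => q (j : ℕ)))
      (fun x => planeWave ℏ k n n le_rfl x - planeWave ℏ k m n hmn.le x) = 2 := by
  have hne : truncationVec k n n ≠ truncationVec k m n := fun h =>
    hkj (by simpa [truncationVec, hmj] using congrArg (· j) h)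
  rw [planeWave_eq_wave, planeWave_eq_wave]
  exact msjo_wave_sub hℏ (fun j => hq j) hne

end PlaneWave

open PlaneWave

/-- the cylindrical plane-wave approximations are at mutual
`M^{∞,1}(ℝ^∞)`-distance 2 whenever the truncations differ; hence, if `k` has
infinitely many nonzero entries, they do not form a Cauchy sequence. -/
theorem planeWave_not_cauchy (ℏ : ℝ) (hℏ : 0 < ℏ) (k : ℕ → ℝ) (q : ℕ → ℝ)
    (hq : ∀ j, 0 < q j) :
    (∀ m n : ℕ, ∀ hmn : m < n, (∃ j : Fin n, m ≤ (j : ℕ) ∧ k (j : ℕ) ≠ 0) →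
      Msjo ℏ (gwin ℏ (fun j : Fin n => q (j : ℕ)))
          (fun x => planeWave ℏ k n n le_rfl x - planeWave ℏ k m n hmn.le x) = 2) ∧
    ({i : ℕ | k i ≠ 0}.Infinite →
      ¬ ∀ δ : ℝ≥0∞, 0 < δ → ∃ N : ℕ, ∀ m n : ℕ, ∀ hmn : m < n, N ≤ m →
        Msjo ℏ (gwin ℏ (fun j : Fin n => q (j : ℕ)))
            (fun x => planeWave ℏ k n n le_rfl x - planeWave ℏ k m n hmn.le x) < δ) := by
  refine ⟨fun m n hmn ⟨j, hmj, hkj⟩ => msjo_planeWave_sub hℏ k hq hmn hmj hkj,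
    fun hinf hcauchy => ?_⟩
  obtain ⟨N, hN⟩ := hcauchy 1 one_pos
  obtain ⟨j, hkj, hNj⟩ := hinf.exists_gt N
  have hfar := hN N (j + 1) (by omega) le_rfl
  rw [msjo_planeWave_sub hℏ k hq (by omega) (j := ⟨j, by omega⟩) hNj.le hkj] at hfar
  exact absurd hfar (by norm_num)
end
end
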